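/- arXiv:1004.4888 — 5 statements merged into one kernel-verified Lean document; each statement's English description precedes it below -/
import Mathlib

section
/- Let the m×n matrix α satisfy conditions (1)–(3) and let 𝒫 = 𝒫_α be the corresponding P-orbit in 𝒜. Then the intersection 𝒜_x ∩ 𝒫 of the variety of x-stable flags with the P-orbit 𝒫 is nonempty if and only if the intersection 𝒜_x^s ∩ 𝒫 of the s-fixed x-stable flags with 𝒫 is nonempty. (Theorem 1(a).) -/
/-!
The reverse implication is trivial; for the forward one we build an `s`-fixed `x`-stable flag
in `𝒫_α` from conditions (1)–(3). Let `A = E 1 ⊕ ⋯ ⊕ E m` be the grading by eigenspaces of `s`,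
so that `ker x^i = E 1 ⊕ ⋯ ⊕ E i`
and `x` maps `E i` injectively into `E (i - 1)`. Choose complete flags `G i` of the `E i`,
from the top down, such that `x` maps the `t`-dimensional member of `G i` into that of
`G (i - 1)`, and put `V j = ⨁ i, G i (α i j - α (i - 1) j)`. Condition (3) says that these
dimensions fit into `E i`; condition (2) says that they decrease in `i`, which makes `V j`
`x`-stable, and increase in `j`, which makes the `V j` nested. Each `V j` is a sum of subspaces
of eigenspaces of `s`, hence `s`-fixed, and `V j ∩ ker x^p = ⨁_{i ≤ p} G i (…)` has dimension
`α p j` by telescoping.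
-/

open Module Submodule

section FullFlag

variable {K V V₂ : Type*} [Field K] [AddCommGroup V] [Module K V] [AddCommGroup V₂] [Module K V₂]

theorem LinearMap.finrank_map_of_disjoint_ker {f : V →ₗ[K] V₂} {U : Submodule K V}
    (h : Disjoint U (ker f)) : finrank K (U.map f) = finrank K U := by
  rw [← LinearMap.range_domRestrict, LinearMap.finrank_range_of_inj]
  exact (LinearMap.injOn_of_disjoint_ker le_rfl h).injective

variable [FiniteDimensional K V]

theorem Submodule.finrank_sup_of_disjoint {U W : Submodule K V} (h : Disjoint U W) :
    finrank K ↥(U ⊔ W) = finrank K U + finrank K W := by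
  have := finrank_sup_add_finrank_inf_eq U W
  rwa [h.eq_bot, finrank_bot, add_zero] at this

theorem Submodule.exists_finrank_eq_succ_of_lt {U W : Submodule K V} (h : U < W) :
    ∃ U', U ≤ U' ∧ U' ≤ W ∧ finrank K U' = finrank K U + 1 := by
  obtain ⟨v, hvW, hvU⟩ := SetLike.exists_of_lt h
  exact ⟨U ⊔ span K {v}, le_sup_left, sup_le h.le (span_singleton_le_iff_mem v W |>.2 hvW),
    finrank_sup_span_singleton hvU⟩

theorem Submodule.exists_monotone_finrank_eq_min {U W : Submodule K V} (hUW : U ≤ W) :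
    ∃ F : ℕ → Submodule K V, F 0 = U ∧ Monotone F ∧ (∀ t, F t ≤ W) ∧
      ∀ t, finrank K (F t) = min (finrank K U + t) (finrank K W) := by
  have step : ∀ U' : Submodule K V, U' ≤ W →
      ∃ U'', U' ≤ U'' ∧ U'' ≤ W ∧ finrank K U'' = min (finrank K U' + 1) (finrank K W) := by
    intro U' hU'
    rcases hU'.lt_or_eq with hlt | rfl
    · obtain ⟨U'', hle, hleW, hrank⟩ := exists_finrank_eq_succ_of_lt hlt
      have := finrank_lt_finrank_of_lt hlt
      exact ⟨U'', hle, hleW, by omega⟩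
    · exact ⟨U', le_rfl, le_rfl, by omega⟩
  choose! next hle hleW hrank using step
  have hW : ∀ t, next^[t] U ≤ W := fun t => by
    induction t with
    | zero => exact hUW
    | succ t ih => rw [Function.iterate_succ_apply']; exact hleW _ ih
  refine ⟨fun t => next^[t] U, rfl, monotone_nat_of_le_succ fun t => ?_, hW, fun t => ?_⟩
  · rw [Function.iterate_succ_apply']
    exact hle _ (hW t)
  · induction t with
    | zero => have := finrank_mono hUW; show finrank K U = _; omega
    | succ t ih =>
      have h := hrank _ (hW t)
      rw [← Function.iterate_succ_apply' next t U, ih] at h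
      exact h.trans (by omega)

structure IsFullFlag (W : Submodule K V) (C : ℕ → Submodule K V) : Prop where
  mono : Monotone C
  le : ∀ t, C t ≤ W
  finrank_eq : ∀ t, finrank K (C t) = min t (finrank K W)

theorem IsFullFlag.exists (W : Submodule K V) : ∃ C, IsFullFlag W C := by
  obtain ⟨C, -, hmono, hle, hrank⟩ := exists_monotone_finrank_eq_min (bot_le : ⊥ ≤ W)
  exact ⟨C, hmono, hle, by simpa using hrank⟩

/-- Push the flag forward by `f`; once `f W'` is exhausted, continue the flag inside `W`. -/
theorem IsFullFlag.exists_map_le {W' : Submodule K V₂} {W : Submodule K V}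
    {C : ℕ → Submodule K V₂} (hC : IsFullFlag W' C) {f : V₂ →ₗ[K] V} (hfW : W'.map f ≤ W)
    (hf : Disjoint W' (LinearMap.ker f)) : ∃ D, IsFullFlag W D ∧ ∀ t, (C t).map f ≤ D t := by
  set e := finrank K W'
  have hrank : ∀ t, finrank K ((C t).map f) = min t e := fun t => by
    rw [LinearMap.finrank_map_of_disjoint_ker (hf.mono_left (hC.le t)), hC.finrank_eq]
  have he : e ≤ finrank K W := by
    simpa only [e, LinearMap.finrank_map_of_disjoint_ker hf] using finrank_mono hfW
  obtain ⟨F, hF0, hFmono, hFW, hFrank⟩ := exists_monotone_finrank_eq_min hfW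
  have hCF : ∀ t t', (C t).map f ≤ F t' := fun t t' =>
    (map_mono (hC.le t)).trans (hF0 ▸ hFmono (Nat.zero_le t'))
  refine ⟨fun t => if t ≤ e then (C t).map f else F (t - e), ⟨fun t t' htt' => ?_, fun t => ?_,
    fun t => ?_⟩, fun t => ?_⟩
  · split_ifs with ht ht'
    · exact map_mono (hC.mono htt')
    · exact hCF t _
    · omega
    · exact hFmono (by omega)
  · split_ifs
    exacts [(map_mono (hC.le t)).trans hfW, hFW _]
  · by_cases ht : t ≤ e
    · rw [if_pos ht, hrank]; omega
    · rw [if_neg ht, hFrank, LinearMap.finrank_map_of_disjoint_ker hf]; omega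
  · dsimp only
    split_ifs
    exacts [le_rfl, hCF t _]

end FullFlag

section Grading

variable {K V : Type*} [Field K] [AddCommGroup V] [Module K V] [FiniteDimensional K V]

/-- The induction step adds the bottom piece `E 1`, onto which the flag of `E 2` is pushed. -/
theorem exists_fullFlags_map_le (f : Module.End K V) (m : ℕ) (E : ℕ → Submodule K V)
    (hfE : ∀ i, 2 ≤ i → i ≤ m → (E i).map f ≤ E (i - 1))
    (hf : ∀ i, 2 ≤ i → i ≤ m → Disjoint (E i) (LinearMap.ker f)) :
    ∃ G : ℕ → ℕ → Submodule K V, (∀ i, 1 ≤ i → i ≤ m → IsFullFlag (E i) (G i)) ∧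
      ∀ i, 2 ≤ i → i ≤ m → ∀ t, (G i t).map f ≤ G (i - 1) t := by
  induction m generalizing E with
  | zero => exact ⟨fun _ _ => ⊥, fun i h1 hi => by omega, fun i h2 hi => by omega⟩
  | succ m ih =>
    obtain ⟨G, hG, hfG⟩ := ih (fun i => E (i + 1))
      (fun i h2 hi => by simpa [show i - 1 + 1 = i by omega] using hfE (i + 1) (by omega) (by omega))
      (fun i h2 hi => hf (i + 1) (by omega) (by omega))
    obtain ⟨D, hD, hfD⟩ : ∃ D, IsFullFlag (E 1) D ∧ (1 ≤ m → ∀ t, (G 1 t).map f ≤ D t) := by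
      rcases Nat.eq_zero_or_pos m with rfl | hm
      · obtain ⟨D, hD⟩ := IsFullFlag.exists (E 1)
        exact ⟨D, hD, by omega⟩
      · obtain ⟨D, hD, hGD⟩ := (hG 1 le_rfl hm).exists_map_le (hfE 2 le_rfl (by omega))
          (hf 2 le_rfl (by omega))
        exact ⟨D, hD, fun _ => hGD⟩
    refine ⟨fun i => if i = 1 then D else G (i - 1), fun i h1 hi => ?_, fun i h2 hi t => ?_⟩
    · by_cases h : i = 1
      · simpa [h] using hD
      · simpa [h, show i - 1 + 1 = i by omega] using hG (i - 1) (by omega) (by omega)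
    · by_cases h : i = 2
      · subst h; simpa using hfD (by omega) t
      · simpa [show i ≠ 1 by omega, show i - 1 ≠ 1 by omega, show i - 1 - 1 + 1 = i - 1 by omega]
          using hfG (i - 1) (by omega) (by omega) t

end Grading

section PartialSups

variable {α : Type*} [CompleteLattice α]

theorem biSup_Icc_one_succ (W : ℕ → α) (r : ℕ) :
    ⨆ i ∈ Finset.Icc 1 (r + 1), W i = (⨆ i ∈ Finset.Icc 1 r, W i) ⊔ W (r + 1) := by
  rw [← Finset.insert_Icc_right_eq_Icc_add_one (by omega), Finset.iSup_insert, sup_comm]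

theorem biSup_Icc_one_le {F W : ℕ → α} {r : ℕ} (hF : Monotone F)
    (hWF : ∀ i, 1 ≤ i → i ≤ r → W i ≤ F i) : ⨆ i ∈ Finset.Icc 1 r, W i ≤ F r :=
  iSup₂_le fun i hi => (hWF i (Finset.mem_Icc.1 hi).1 (Finset.mem_Icc.1 hi).2).trans
    (hF (Finset.mem_Icc.1 hi).2)

theorem biSup_Icc_one_mono {W W' : ℕ → α} {r : ℕ} (h : ∀ i, 1 ≤ i → i ≤ r → W i ≤ W' i) :
    ⨆ i ∈ Finset.Icc 1 r, W i ≤ ⨆ i ∈ Finset.Icc 1 r, W' i :=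
  iSup₂_mono fun i hi => h i (Finset.mem_Icc.1 hi).1 (Finset.mem_Icc.1 hi).2

theorem biSup_Icc_one_inf_eq [IsModularLattice α] {F W : ℕ → α} {p r : ℕ} (hF : Monotone F)
    (hWF : ∀ i, 1 ≤ i → i ≤ r → W i ≤ F i) (hWF' : ∀ i, i < r → Disjoint (W (i + 1)) (F i))
    (hpr : p ≤ r) : (⨆ i ∈ Finset.Icc 1 r, W i) ⊓ F p = ⨆ i ∈ Finset.Icc 1 p, W i := by
  induction r, hpr using Nat.le_induction with
  | base => exact inf_eq_left.2 (biSup_Icc_one_le hF hWF)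
  | succ r hpr ih =>
    have hS : ⨆ i ∈ Finset.Icc 1 r, W i ≤ F r :=
      biSup_Icc_one_le hF fun i h1 hi => hWF i h1 (by omega)
    calc (⨆ i ∈ Finset.Icc 1 (r + 1), W i) ⊓ F p
        = ((⨆ i ∈ Finset.Icc 1 r, W i) ⊔ W (r + 1)) ⊓ F r ⊓ F p := by
          rw [biSup_Icc_one_succ, inf_assoc, inf_eq_right.2 (hF hpr)]
      _ = (⨆ i ∈ Finset.Icc 1 r, W i) ⊓ F p := by
          rw [sup_inf_assoc_of_le _ hS, (hWF' r (by omega)).eq_bot, sup_bot_eq]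
      _ = ⨆ i ∈ Finset.Icc 1 p, W i :=
          ih (fun i h1 hi => hWF i h1 (by omega)) fun i hi => hWF' i (by omega)

end PartialSups

section Filtration

variable {K V : Type*} [Field K] [AddCommGroup V] [Module K V] [FiniteDimensional K V]

theorem finrank_biSup_Icc_one {F W : ℕ → Submodule K V} {r : ℕ} (hF : Monotone F)
    (hWF : ∀ i, 1 ≤ i → i ≤ r → W i ≤ F i) (hWF' : ∀ i, i < r → Disjoint (W (i + 1)) (F i)) :
    finrank K ↥(⨆ i ∈ Finset.Icc 1 r, W i) = ∑ i ∈ Finset.Icc 1 r, finrank K (W i) := by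
  induction r with
  | zero => simp
  | succ r ih =>
    have hS : ⨆ i ∈ Finset.Icc 1 r, W i ≤ F r :=
      biSup_Icc_one_le hF fun i h1 hi => hWF i h1 (by omega)
    rw [biSup_Icc_one_succ, finrank_sup_of_disjoint ((hWF' r (by omega)).symm.mono_left hS),
      Finset.sum_Icc_succ_top (by omega),
      ih (fun i h1 hi => hWF i h1 (by omega)) fun i hi => hWF' i (by omega)]

end Filtration

/-- The dimension `α i j - α (i - 1) j` (with `α 0 j = 0`) that the `i`-th graded piece
contributes to the `j`-th subspace of the flag. -/
def jump (α : ℕ → ℕ → ℕ) (i j : ℕ) : ℕ := if i = 1 then α 1 j else α i j - α (i - 1) j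

section Jump

variable {α : ℕ → ℕ → ℕ} {m n : ℕ}

theorem sum_jump
    (h1a : ∀ i i' j j', 1 ≤ i → i ≤ i' → i' ≤ m → 1 ≤ j → j ≤ j' → j' ≤ n → α i j ≤ α i' j')
    {p j : ℕ} (hp1 : 1 ≤ p) (hpm : p ≤ m) (hj1 : 1 ≤ j) (hjn : j ≤ n) :
    ∑ i ∈ Finset.Icc 1 p, jump α i j = α p j := by
  induction p, hp1 using Nat.le_induction with
  | base => simp [jump]
  | succ p hp ih =>
    have := h1a p (p + 1) j j hp (by omega) hpm hj1 le_rfl hjn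
    rw [Finset.sum_Icc_succ_top (by omega), ih (by omega), jump, if_neg (by omega),
      Nat.add_sub_cancel]
    omega

theorem jump_le {l : ℕ → ℕ} (hl0 : l 0 = 0)
    (h3a : ∀ i j, 2 ≤ i → i ≤ m → 1 ≤ j → j ≤ n → α i j + l (i - 1) ≤ α (i - 1) j + l i)
    (h3b : ∀ j, 1 ≤ j → j ≤ n → α 1 j ≤ l 1)
    {i j : ℕ} (hi1 : 1 ≤ i) (him : i ≤ m) (hj1 : 1 ≤ j) (hjn : j ≤ n) :
    jump α i j ≤ l i - l (i - 1) := by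
  unfold jump
  split_ifs with hi
  · subst hi; simpa [hl0] using h3b j hj1 hjn
  · have := h3a i j (by omega) him hj1 hjn; omega

theorem jump_mono
    (h1a : ∀ i i' j j', 1 ≤ i → i ≤ i' → i' ≤ m → 1 ≤ j → j ≤ j' → j' ≤ n → α i j ≤ α i' j')
    (h2a : ∀ i i' j j', 2 ≤ i → i ≤ i' → i' ≤ m → 1 ≤ j' → j' ≤ j → j ≤ n →
      α i' j' + α (i - 1) j ≤ α i j + α (i' - 1) j')
    {i j j' : ℕ} (hi1 : 1 ≤ i) (him : i ≤ m) (hj1 : 1 ≤ j) (hjj' : j ≤ j') (hj'n : j' ≤ n) :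
    jump α i j ≤ jump α i j' := by
  unfold jump
  split_ifs with hi
  · subst hi; exact h1a 1 1 j j' le_rfl le_rfl him hj1 hjj' hj'n
  · have := h2a i i j' j (by omega) le_rfl him hj1 hjj' hj'n
    omega

theorem jump_le_jump_pred
    (h1a : ∀ i i' j j', 1 ≤ i → i ≤ i' → i' ≤ m → 1 ≤ j → j ≤ j' → j' ≤ n → α i j ≤ α i' j')
    (h2a : ∀ i i' j j', 2 ≤ i → i ≤ i' → i' ≤ m → 1 ≤ j' → j' ≤ j → j ≤ n →
      α i' j' + α (i - 1) j ≤ α i j + α (i' - 1) j')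
    (h2b : ∀ i j, 2 ≤ i → i ≤ m → 1 ≤ j → j ≤ n → α i j ≤ α (i - 1) j + α 1 j)
    {i j : ℕ} (hi2 : 2 ≤ i) (him : i ≤ m) (hj1 : 1 ≤ j) (hjn : j ≤ n) :
    jump α i j ≤ jump α (i - 1) j := by
  have hpred := h1a (i - 1) i j j (by omega) (by omega) him hj1 le_rfl hjn
  rw [jump, jump, if_neg (by omega)]
  split_ifs with hi
  · have := h2b i j hi2 him hj1 hjn
    rw [hi] at this ⊢; omega
  · have := h2a (i - 1) i j j (by omega) (by omega) him hj1 le_rfl hjn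
    have := h1a (i - 1 - 1) (i - 1) j j (by omega) (by omega) (by omega) hj1 le_rfl hjn
    omega

end Jump

section Endomorphism

variable {K V : Type*} [Field K] [AddCommGroup V] [Module K V]

theorem LinearMap.monotone_ker_pow (f : Module.End K V) :
    Monotone fun i : ℕ => LinearMap.ker (f ^ i) := fun i j hij => by
  dsimp only
  rw [← pow_sub_mul_pow f hij, Module.End.mul_eq_comp]
  exact LinearMap.ker_le_ker_comp _ _

theorem map_biSup_Icc_one_le {f : Module.End K V} {W : ℕ → Submodule K V} {r : ℕ}
    (hW1 : W 1 ≤ LinearMap.ker f) (hW : ∀ i, 2 ≤ i → i ≤ r → (W i).map f ≤ W (i - 1)) :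
    (⨆ i ∈ Finset.Icc 1 r, W i).map f ≤ ⨆ i ∈ Finset.Icc 1 r, W i := by
  refine map_le_iff_le_comap.2 (iSup₂_le fun i hi => ?_)
  obtain ⟨hi1, hir⟩ := Finset.mem_Icc.1 hi
  rcases hi1.eq_or_lt with rfl | hi2
  · exact hW1.trans (LinearMap.ker_le_comap f)
  · exact map_le_iff_le_comap.1 ((hW i hi2 hir).trans
      (le_iSup₂_of_le (i - 1) (Finset.mem_Icc.2 ⟨by omega, by omega⟩) le_rfl))

theorem Submodule.map_le_of_forall_eq_smul {f : Module.End K V} {U : Submodule K V} {c : K}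
    (h : ∀ v ∈ U, f v = c • v) : U.map f ≤ U := by
  rintro _ ⟨v, hv, rfl⟩
  rw [h v hv]
  exact U.smul_mem c hv

variable [FiniteDimensional K V]

theorem LinearEquiv.map_eq_of_map_le (s : V ≃ₗ[K] V) {U : Submodule K V}
    (h : U.map s.toLinearMap ≤ U) : U.map s.toLinearMap = U :=
  eq_of_le_of_finrank_eq h (s.finrank_map_eq U)

theorem finrank_ker_pow_eq_add (x : Module.End K V) {m : ℕ} {E : ℕ → Submodule K V}
    (hEker : ∀ i, i ≤ m → LinearMap.ker (x ^ i) = ⨆ h ∈ Finset.Icc 1 i, E h)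
    (hEindep : ∀ i, 1 ≤ i → i ≤ m → Disjoint (E i) (LinearMap.ker (x ^ (i - 1))))
    {i : ℕ} (hi1 : 1 ≤ i) (him : i ≤ m) :
    finrank K (LinearMap.ker (x ^ i)) = finrank K (LinearMap.ker (x ^ (i - 1))) + finrank K (E i) := by
  obtain ⟨r, rfl⟩ : ∃ r, i = r + 1 := ⟨i - 1, by omega⟩
  have hdisj := hEindep (r + 1) hi1 him
  rw [Nat.add_sub_cancel] at hdisj ⊢
  rw [hEker _ him, biSup_Icc_one_succ, ← hEker r (by omega), finrank_sup_of_disjoint hdisj.symm]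

theorem jump_le_finrank (x : Module.End K V) {m n : ℕ} {E : ℕ → Submodule K V}
    (hEker : ∀ i, i ≤ m → LinearMap.ker (x ^ i) = ⨆ h ∈ Finset.Icc 1 i, E h)
    (hEindep : ∀ i, 1 ≤ i → i ≤ m → Disjoint (E i) (LinearMap.ker (x ^ (i - 1))))
    {α : ℕ → ℕ → ℕ} {l : ℕ → ℕ} (hl : ∀ i, l i = finrank K ↥(LinearMap.ker (x ^ i)))
    (h3a : ∀ i j, 2 ≤ i → i ≤ m → 1 ≤ j → j ≤ n → α i j + l (i - 1) ≤ α (i - 1) j + l i)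
    (h3b : ∀ j, 1 ≤ j → j ≤ n → α 1 j ≤ l 1)
    {i j : ℕ} (hi1 : 1 ≤ i) (him : i ≤ m) (hj1 : 1 ≤ j) (hjn : j ≤ n) :
    jump α i j ≤ finrank K (E i) := by
  have hl0 : l 0 = 0 := by simp [hl, Module.End.one_eq_id]
  have := jump_le hl0 h3a h3b hi1 him hj1 hjn
  rw [hl, hl, finrank_ker_pow_eq_add x hEker hEindep hi1 him] at this
  omega

end Endomorphism

theorem theorem_1a_general
    (K : Type*) [Field K]
    (A : Type*) [AddCommGroup A] [Module K A] [FiniteDimensional K A]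
    (x : Module.End K A) (m : ℕ) (hm : 1 ≤ m)
    (n : ℕ)
    (k : ℕ → ℕ)
    -- the semisimple element `s`, with `s x s⁻¹ = q x`, encoded through the grading
    (s : A ≃ₗ[K] A) (q : Kˣ) (lam0 : Kˣ)
    (E : ℕ → Submodule K A)
    (hEker : ∀ i, i ≤ m → LinearMap.ker (x ^ i) = ⨆ h ∈ Finset.Icc 1 i, E h)
    (hEindep : ∀ i, 1 ≤ i → i ≤ m → Disjoint (E i) (LinearMap.ker (x ^ (i - 1))))
    (hEx : ∀ i, 2 ≤ i → i ≤ m → (E i).map x ≤ E (i - 1))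
    (hEs : ∀ i, 1 ≤ i → i ≤ m → ∀ v ∈ E i, s v = ((lam0 : K) * ((q : K)⁻¹) ^ i) • v)
    -- the matrix `α`, satisfying conditions (1)–(3)
    (α : ℕ → ℕ → ℕ)
    (l : ℕ → ℕ) (hl : ∀ i, l i = finrank K ↥(LinearMap.ker (x ^ i)))
    (h1a : ∀ i i' j j', 1 ≤ i → i ≤ i' → i' ≤ m → 1 ≤ j → j ≤ j' → j' ≤ n → α i j ≤ α i' j')
    (h1b : ∀ j, 1 ≤ j → j ≤ n → α m j = k j)
    (h2a : ∀ i i' j j', 2 ≤ i → i ≤ i' → i' ≤ m → 1 ≤ j' → j' ≤ j → j ≤ n →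
      α i' j' + α (i - 1) j ≤ α i j + α (i' - 1) j')
    (h2b : ∀ i j, 2 ≤ i → i ≤ m → 1 ≤ j → j ≤ n → α i j ≤ α (i - 1) j + α 1 j)
    (h3a : ∀ i j, 2 ≤ i → i ≤ m → 1 ≤ j → j ≤ n → α i j + l (i - 1) ≤ α (i - 1) j + l i)
    (h3b : ∀ j, 1 ≤ j → j ≤ n → α 1 j ≤ l 1) :
    -- `𝒜_x ∩ 𝒫 ≠ ∅ ↔ 𝒜_x^s ∩ 𝒫 ≠ ∅`
    (∃ V : ℕ → Submodule K A,
      (∀ j j', 1 ≤ j → j ≤ j' → j' ≤ n → V j ≤ V j') ∧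
      (∀ j, 1 ≤ j → j ≤ n → finrank K ↥(V j) = k j) ∧
      (∀ j, 1 ≤ j → j ≤ n → (V j).map x ≤ V j) ∧
      (∀ i j, 1 ≤ i → i ≤ m → 1 ≤ j → j ≤ n →
        finrank K ↥(V j ⊓ LinearMap.ker (x ^ i)) = α i j)) ↔
    (∃ V : ℕ → Submodule K A,
      (∀ j j', 1 ≤ j → j ≤ j' → j' ≤ n → V j ≤ V j') ∧
      (∀ j, 1 ≤ j → j ≤ n → finrank K ↥(V j) = k j) ∧
      (∀ j, 1 ≤ j → j ≤ n → (V j).map x ≤ V j) ∧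
      (∀ j, 1 ≤ j → j ≤ n → (V j).map s.toLinearMap = V j) ∧
      (∀ i j, 1 ≤ i → i ≤ m → 1 ≤ j → j ≤ n →
        finrank K ↥(V j ⊓ LinearMap.ker (x ^ i)) = α i j)) := by
  refine ⟨fun _ => ?_, fun ⟨V, hmono, hrank, hx, _, hdim⟩ => ⟨V, hmono, hrank, hx, hdim⟩⟩
  have hker := LinearMap.monotone_ker_pow x
  obtain ⟨G, hG, hxG⟩ := exists_fullFlags_map_le x m E hEx fun i hi2 him =>
    (hEindep i (by omega) him).mono_right (by simpa using hker (by omega : 1 ≤ i - 1))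
  set W : ℕ → ℕ → Submodule K A := fun j i => G i (jump α i j)
  have hWker : ∀ j i, 1 ≤ i → i ≤ m → W j i ≤ LinearMap.ker (x ^ i) := fun j i hi1 him =>
    ((hG i hi1 him).le _).trans (hEker i him ▸ le_biSup E (Finset.mem_Icc.2 ⟨hi1, le_rfl⟩))
  have hWdisj : ∀ j i, i < m → Disjoint (W j (i + 1)) (LinearMap.ker (x ^ i)) := fun j i him =>
    by simpa using (hEindep (i + 1) (by omega) him).mono_left ((hG (i + 1) (by omega) him).le _)
  have hWdim : ∀ j p, 1 ≤ j → j ≤ n → 1 ≤ p → p ≤ m →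
      finrank K ↥(⨆ i ∈ Finset.Icc 1 p, W j i) = α p j := fun j p hj1 hjn hp1 hpm => by
    rw [finrank_biSup_Icc_one hker (fun i hi1 hip => hWker j i hi1 (by omega))
      (fun i hip => hWdisj j i (by omega)), ← sum_jump h1a hp1 hpm hj1 hjn]
    refine Finset.sum_congr rfl fun i hi => ?_
    obtain ⟨hi1, hip⟩ := Finset.mem_Icc.1 hi
    rw [(hG i hi1 (by omega)).finrank_eq, min_eq_left
      (jump_le_finrank x hEker hEindep hl h3a h3b hi1 (by omega) hj1 hjn)]
  refine ⟨fun j => ⨆ i ∈ Finset.Icc 1 m, W j i, fun j j' hj1 hjj' hj'n => ?_,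
    fun j hj1 hjn => ?_, fun j hj1 hjn => ?_, fun j hj1 hjn => ?_, fun i j hi1 him hj1 hjn => ?_⟩
  · exact biSup_Icc_one_mono fun i hi1 him =>
      (hG i hi1 him).mono (jump_mono h1a h2a hi1 him hj1 hjj' hj'n)
  · rw [hWdim j m hj1 hjn hm le_rfl, h1b j hj1 hjn]
  · refine map_biSup_Icc_one_le (by simpa using hWker j 1 le_rfl hm) fun i hi2 him => ?_
    exact (hxG i hi2 him _).trans ((hG (i - 1) (by omega) (by omega)).mono
      (jump_le_jump_pred h1a h2a h2b hi2 him hj1 hjn))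
  · refine s.map_eq_of_map_le ?_
    simp only [W, Submodule.map_iSup]
    exact biSup_Icc_one_mono fun i hi1 him =>
      map_le_of_forall_eq_smul fun v hv => hEs i hi1 him v ((hG i hi1 him).le _ hv)
  · rw [biSup_Icc_one_inf_eq hker (hWker j) (hWdisj j) him, hWdim j i hj1 hjn hi1 him]

/-- **Theorem 1(a).** Let `x` be a nilpotent endomorphism of nilpotent
order `m` of a finite-dimensional vector space `A` over an algebraically closed field `K`
of characteristic zero, and let `s ∈ GL(A)` be a semisimple element of the parabolic `P`
(stabilizing the kernels `ker x^i`) with `s x s⁻¹ = q x`, whose centralizer is a Levi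
subgroup of `P`; such an `s` is encoded by the grading `A = E 1 ⊕ … ⊕ E m` it induces,
with `ker x^i = E 1 ⊕ … ⊕ E i`, `x (E i) ⊆ E (i-1)`, and `s` acting on `E i` by the
pairwise distinct scalars `lam0 q⁻ⁱ`.  Let the `m × n` matrix `α` satisfy conditions
(1)–(3) and let `𝒫 = 𝒫_α` be the corresponding `P`-orbit of the partial flag variety
`𝒜 = F_{k_•}(A)`.  Then `𝒜_x ∩ 𝒫 ≠ ∅` if and only if `𝒜_x^s ∩ 𝒫 ≠ ∅`. -/
theorem theorem_1a
    (K : Type*) [Field K] [IsAlgClosed K] [CharZero K]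
    (A : Type*) [AddCommGroup A] [Module K A] [FiniteDimensional K A]
    (x : Module.End K A) (m : ℕ) (hm : 1 ≤ m)
    (hxm : x ^ m = 0) (hxm1 : x ^ (m - 1) ≠ 0)
    (n : ℕ) (d : ℕ) (hd : d = finrank K A)
    (k : ℕ → ℕ) (hk : ∀ j j', 1 ≤ j → j ≤ j' → j' ≤ n → k j ≤ k j')
    (hkd : ∀ j, 1 ≤ j → j ≤ n → k j ≤ d)
    -- the semisimple element `s`, with `s x s⁻¹ = q x`, encoded through the grading
    (s : A ≃ₗ[K] A) (q : Kˣ) (lam0 : Kˣ)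
    (hsx : ∀ v : A, s (x v) = (q : K) • x (s v))
    (E : ℕ → Submodule K A)
    (hEker : ∀ i, i ≤ m → LinearMap.ker (x ^ i) = ⨆ h ∈ Finset.Icc 1 i, E h)
    (hEindep : ∀ i, 1 ≤ i → i ≤ m → Disjoint (E i) (LinearMap.ker (x ^ (i - 1))))
    (hEx : ∀ i, 2 ≤ i → i ≤ m → (E i).map x ≤ E (i - 1))
    (hEs : ∀ i, 1 ≤ i → i ≤ m → ∀ v ∈ E i, s v = ((lam0 : K) * ((q : K)⁻¹) ^ i) • v)
    (hdist : ∀ i i', 1 ≤ i → i < i' → i' ≤ m →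
      (lam0 : K) * ((q : K)⁻¹) ^ i ≠ (lam0 : K) * ((q : K)⁻¹) ^ i')
    -- the matrix `α`, satisfying conditions (1)–(3)
    (α : ℕ → ℕ → ℕ)
    (l : ℕ → ℕ) (hl : ∀ i, l i = finrank K ↥(LinearMap.ker (x ^ i)))
    (h1a : ∀ i i' j j', 1 ≤ i → i ≤ i' → i' ≤ m → 1 ≤ j → j ≤ j' → j' ≤ n → α i j ≤ α i' j')
    (h1b : ∀ j, 1 ≤ j → j ≤ n → α m j = k j)
    (h2a : ∀ i i' j j', 2 ≤ i → i ≤ i' → i' ≤ m → 1 ≤ j' → j' ≤ j → j ≤ n →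
      α i' j' + α (i - 1) j ≤ α i j + α (i' - 1) j')
    (h2b : ∀ i j, 2 ≤ i → i ≤ m → 1 ≤ j → j ≤ n → α i j ≤ α (i - 1) j + α 1 j)
    (h3a : ∀ i j, 2 ≤ i → i ≤ m → 1 ≤ j → j ≤ n → α i j + l (i - 1) ≤ α (i - 1) j + l i)
    (h3b : ∀ j, 1 ≤ j → j ≤ n → α 1 j ≤ l 1) :
    -- `𝒜_x ∩ 𝒫 ≠ ∅ ↔ 𝒜_x^s ∩ 𝒫 ≠ ∅`
    (∃ V : ℕ → Submodule K A,
      (∀ j j', 1 ≤ j → j ≤ j' → j' ≤ n → V j ≤ V j') ∧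
      (∀ j, 1 ≤ j → j ≤ n → finrank K ↥(V j) = k j) ∧
      (∀ j, 1 ≤ j → j ≤ n → (V j).map x ≤ V j) ∧
      (∀ i j, 1 ≤ i → i ≤ m → 1 ≤ j → j ≤ n →
        finrank K ↥(V j ⊓ LinearMap.ker (x ^ i)) = α i j)) ↔
    (∃ V : ℕ → Submodule K A,
      (∀ j j', 1 ≤ j → j ≤ j' → j' ≤ n → V j ≤ V j') ∧
      (∀ j, 1 ≤ j → j ≤ n → finrank K ↥(V j) = k j) ∧
      (∀ j, 1 ≤ j → j ≤ n → (V j).map x ≤ V j) ∧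
      (∀ j, 1 ≤ j → j ≤ n → (V j).map s.toLinearMap = V j) ∧
      (∀ i j, 1 ≤ i → i ≤ m → 1 ≤ j → j ≤ n →
        finrank K ↥(V j ⊓ LinearMap.ker (x ^ i)) = α i j)) :=
  theorem_1a_general K A x m hm n k s q lam0 E hEker hEindep hEx hEs α l hl h1a h1b h2a h2b h3a h3b
end

section
/- Let the m×n matrix α satisfy conditions (1)–(3), let 𝒫 = 𝒫_α, let A_• = (A_1,…,A_m) be the partial flag with A_i = x^{m−i}(ker x^{m−i+1}) (so d_i = dim ker x^{m−i+1} − dim ker x^{m−i}), and let κ be the m×n matrix with κ_{i,j} = α_{m−i+1,j} − α_{m−i,j} for i ≤ m−1 and κ_{m,j} = α_{1,j}. Then the intersection 𝒜_x^s ∩ 𝒫 is open and closed in 𝒜_x^s. (Proposition 3(a).) -/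
open Module Submodule

/-- A Zariski-like topology on families of subspaces of `A` indexed by `ι`, generated by
the conditions `dim (V p ⊓ W) ≤ r` and `dim (V p ⊓ V q) ≤ r`; all these sets are open in
the Zariski topology of the corresponding product of Grassmannian varieties. -/
def schubertTopology (K A ι : Type*) [Field K] [AddCommGroup A] [Module K A] :
    TopologicalSpace (ι → Submodule K A) :=
  TopologicalSpace.generateFrom
    ({S | ∃ (p : ι) (W : Submodule K A) (r : ℕ),
        S = {V : ι → Submodule K A | Module.finrank K ↥(V p ⊓ W) ≤ r}} ∪
     {S | ∃ (p q : ι) (r : ℕ), S = {V : ι → Submodule K A | Module.finrank K ↥(V p ⊓ V q) ≤ r}})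

instance (priority := high) schubertTopologyInstance
    (K A ι : Type*) [Field K] [AddCommGroup A] [Module K A] :
    TopologicalSpace (ι → Submodule K A) := schubertTopology K A ι

section Aux

variable {K A : Type*} [Field K] [AddCommGroup A] [Module K A]

private lemma aux_pow_eigen (f : Module.End K A) (c : K) (v : A) (h : f v = c • v) :
    ∀ t : ℕ, (f ^ t) v = c ^ t • v := by
  intro t
  induction t with
  | zero => simp
  | succ t ih =>
      rw [pow_succ', Module.End.mul_apply, ih, map_smul, h, smul_smul, pow_succ']
      ring_nf

private lemma aux_aeval_eigen (f : Module.End K A) (c : K) (v : A) (h : f v = c • v)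
    (p : Polynomial K) : Polynomial.aeval f p v = p.eval c • v := by
  induction p using Polynomial.induction_on' with
  | add p q hp hq => simp [hp, hq, add_smul]
  | monomial t a =>
      rw [Polynomial.aeval_monomial, Polynomial.eval_monomial, Module.End.mul_apply,
        Module.algebraMap_end_apply, aux_pow_eigen f c v h t, smul_smul]

private lemma aux_aeval_mem (f : Module.End K A) (V : Submodule K A)
    (hV : ∀ v ∈ V, f v ∈ V) (p : Polynomial K) : ∀ v ∈ V, Polynomial.aeval f p v ∈ V := by
  have hpow : ∀ t : ℕ, ∀ v ∈ V, (f ^ t) v ∈ V := by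
    intro t
    induction t with
    | zero => intro v hv; simpa using hv
    | succ t ih => intro v hv; rw [pow_succ, Module.End.mul_apply]; exact ih _ (hV v hv)
  induction p using Polynomial.induction_on' with
  | add p q hp hq =>
      intro v hv
      rw [map_add, LinearMap.add_apply]
      exact add_mem (hp v hv) (hq v hv)
  | monomial t a =>
      intro v hv
      rw [Polynomial.aeval_monomial, Module.End.mul_apply, Module.algebraMap_end_apply]
      exact Submodule.smul_mem _ _ (hpow t v hv)

private lemma aux_proj_split [FiniteDimensional K A] (π : Module.End K A)
    (P W V : Submodule K A)
    (hP : ∀ v ∈ P, π v = v) (hW : ∀ v ∈ W, π v = 0)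
    (htop : P ⊔ W = ⊤) (hV : ∀ v ∈ V, π v ∈ V) :
    finrank K ↥(V ⊓ P) + finrank K ↥(V ⊓ W) = finrank K ↥V := by
  have hproj : ∀ v : A, π v ∈ P ∧ v - π v ∈ W := by
    intro v
    have hv : v ∈ P ⊔ W := htop ▸ Submodule.mem_top
    obtain ⟨u, hu, w, hw, rfl⟩ := Submodule.mem_sup.mp hv
    have hπ : π (u + w) = u := by rw [map_add, hP u hu, hW w hw, add_zero]
    rw [hπ]
    exact ⟨hu, by simpa using hw⟩
  have hdisj : P ⊓ W ≤ ⊥ := by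
    intro v hv
    have h1 := hP v hv.1
    have h2 := hW v hv.2
    simp only [Submodule.mem_bot]
    rw [← h1, h2]
  have hsup : (V ⊓ P) ⊔ (V ⊓ W) = V := by
    apply le_antisymm (sup_le inf_le_left inf_le_left)
    intro v hv
    have h1 : π v ∈ V ⊓ P := ⟨hV v hv, (hproj v).1⟩
    have h2 : v - π v ∈ V ⊓ W := ⟨sub_mem hv (hV v hv), (hproj v).2⟩
    have := add_mem (Submodule.mem_sup_left h1) (Submodule.mem_sup_right h2)
    simpa using this
  have hbot : (V ⊓ P) ⊓ (V ⊓ W) = ⊥ :=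
    eq_bot_iff.mpr (le_trans (inf_le_inf inf_le_right inf_le_right) hdisj)
  have hfr := Submodule.finrank_sup_add_finrank_inf_eq (V ⊓ P) (V ⊓ W)
  rw [hsup, hbot, finrank_bot] at hfr
  omega

private lemma aux_basic_open (ι : Type*) (p : ι) (W : Submodule K A) (r : ℕ) :
    IsOpen {V : ι → Submodule K A | finrank K ↥(V p ⊓ W) ≤ r} :=
  TopologicalSpace.GenerateOpen.basic _ (Or.inl ⟨p, W, r, rfl⟩)

private lemma aux_basic_open_lt (ι : Type*) (p : ι) (W : Submodule K A) (r : ℕ) :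
    IsOpen {V : ι → Submodule K A | finrank K ↥(V p ⊓ W) < r} := by
  cases r with
  | zero =>
      convert isOpen_empty (X := ι → Submodule K A)
      ext V; simp
  | succ r =>
      convert aux_basic_open ι p W r using 1
      ext V; simp [Nat.lt_succ_iff]

end Aux

/-- **Proposition 3(a).** Let the `m × n` matrix `α` satisfy conditions
(1)–(3) and let `𝒫 = 𝒫_α`.  Then the intersection `𝒜_x^s ∩ 𝒫` is open and closed in
`𝒜_x^s` (here `𝒜_x^s` carries the topology induced by the Zariski-like topology on
families of subspaces).  The semisimple element `s` is encoded through the grading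
`A = E 1 ⊕ … ⊕ E m` it induces. -/
theorem proposition_3a
    (K : Type*) [Field K] [IsAlgClosed K] [CharZero K]
    (A : Type*) [AddCommGroup A] [Module K A] [FiniteDimensional K A]
    (x : Module.End K A) (m : ℕ) (hm : 1 ≤ m)
    (hxm : x ^ m = 0) (hxm1 : x ^ (m - 1) ≠ 0)
    (n : ℕ) (d : ℕ) (hd : d = finrank K A)
    (k : ℕ → ℕ) (hk : ∀ j j', 1 ≤ j → j ≤ j' → j' ≤ n → k j ≤ k j')
    (hkd : ∀ j, 1 ≤ j → j ≤ n → k j ≤ d)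
    -- the semisimple element `s`, with `s x s⁻¹ = q x`, encoded through the grading
    (s : A ≃ₗ[K] A) (q : Kˣ) (lam0 : Kˣ)
    (hsx : ∀ v : A, s (x v) = (q : K) • x (s v))
    (E : ℕ → Submodule K A)
    (hEker : ∀ i, i ≤ m → LinearMap.ker (x ^ i) = ⨆ h ∈ Finset.Icc 1 i, E h)
    (hEindep : ∀ i, 1 ≤ i → i ≤ m → Disjoint (E i) (LinearMap.ker (x ^ (i - 1))))
    (hEx : ∀ i, 2 ≤ i → i ≤ m → (E i).map x ≤ E (i - 1))
    (hEs : ∀ i, 1 ≤ i → i ≤ m → ∀ v ∈ E i, s v = ((lam0 : K) * ((q : K)⁻¹) ^ i) • v)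
    (hdist : ∀ i i', 1 ≤ i → i < i' → i' ≤ m →
      (lam0 : K) * ((q : K)⁻¹) ^ i ≠ (lam0 : K) * ((q : K)⁻¹) ^ i')
    -- the matrix `α`, satisfying conditions (1)–(3)
    (α : ℕ → ℕ → ℕ)
    (l : ℕ → ℕ) (hl : ∀ i, l i = finrank K ↥(LinearMap.ker (x ^ i)))
    (h1a : ∀ i i' j j', 1 ≤ i → i ≤ i' → i' ≤ m → 1 ≤ j → j ≤ j' → j' ≤ n → α i j ≤ α i' j')
    (h1b : ∀ j, 1 ≤ j → j ≤ n → α m j = k j)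
    (h2a : ∀ i i' j j', 2 ≤ i → i ≤ i' → i' ≤ m → 1 ≤ j' → j' ≤ j → j ≤ n →
      α i' j' + α (i - 1) j ≤ α i j + α (i' - 1) j')
    (h2b : ∀ i j, 2 ≤ i → i ≤ m → 1 ≤ j → j ≤ n → α i j ≤ α (i - 1) j + α 1 j)
    (h3a : ∀ i j, 2 ≤ i → i ≤ m → 1 ≤ j → j ≤ n → α i j + l (i - 1) ≤ α (i - 1) j + l i)
    (h3b : ∀ j, 1 ≤ j → j ≤ n → α 1 j ≤ l 1) :
    -- `𝒜_x^s ∩ 𝒫` is open and closed in `𝒜_x^s`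
    IsClopen {V : {V : Fin n → Submodule K A //
        Monotone V ∧ (∀ j, finrank K ↥(V j) = k (j.1 + 1)) ∧
        (∀ j, (V j).map x ≤ V j) ∧
        (∀ j, (V j).map s.toLinearMap = V j)} |
      ∀ i, 1 ≤ i → i ≤ m → ∀ j : Fin n,
        finrank K ↥(V.1 j ⊓ LinearMap.ker (x ^ i)) = α i (j.1 + 1)} := by
  classical
  set lamf : ℕ → K := fun h => (lam0 : K) * ((q : K)⁻¹) ^ h with hlamf
  have hinj : Set.InjOn lamf (Finset.Icc 1 m) := by
    intro a ha b hb hab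
    simp only [Finset.coe_Icc, Set.mem_Icc] at ha hb
    rcases lt_trichotomy a b with h | h | h
    · exact absurd hab (hdist a b ha.1 h hb.2)
    · exact h
    · exact absurd hab.symm (hdist b a hb.1 h ha.2)
  set Wsp : ℕ → Submodule K A := fun i => ⨆ h ∈ Finset.Icc (i + 1) m, E h with hWsp
  -- the key dimension identity on `s`-stable subspaces
  have key : ∀ i, 1 ≤ i → i ≤ m → ∀ V : Submodule K A, V.map s.toLinearMap = V →
      finrank K ↥(V ⊓ LinearMap.ker (x ^ i)) + finrank K ↥(V ⊓ Wsp i) = finrank K ↥V := by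
    intro i hi1 him V hVs
    set f : Polynomial K :=
      Lagrange.interpolate (Finset.Icc 1 m) lamf (fun h => if h ≤ i then (1 : K) else 0) with hf
    set π : Module.End K A := Polynomial.aeval s.toLinearMap f with hπ
    have heig : ∀ h ∈ Finset.Icc 1 m, ∀ v ∈ E h,
        π v = (if h ≤ i then (1 : K) else 0) • v := by
      intro h hh v hv
      have hh' := Finset.mem_Icc.mp hh
      have hsv : s.toLinearMap v = lamf h • v := hEs h hh'.1 hh'.2 v hv
      rw [hπ, aux_aeval_eigen s.toLinearMap (lamf h) v hsv f, hf,
        Lagrange.eval_interpolate_at_node _ hinj hh]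
    have hπP : ∀ v ∈ LinearMap.ker (x ^ i), π v = v := by
      have hker := hEker i him
      have hle : LinearMap.ker (x ^ i) ≤ LinearMap.ker (π - LinearMap.id) := by
        rw [hker]
        apply iSup_le; intro h; apply iSup_le; intro hh
        intro v hv
        have hh' := Finset.mem_Icc.mp hh
        have hhm : h ∈ Finset.Icc 1 m := Finset.mem_Icc.mpr ⟨hh'.1, le_trans hh'.2 him⟩
        have := heig h hhm v hv
        rw [if_pos hh'.2] at this
        simp only [LinearMap.mem_ker, LinearMap.sub_apply, LinearMap.id_apply]
        rw [this, one_smul, sub_self]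
      intro v hv
      have := hle hv
      simp only [LinearMap.mem_ker, LinearMap.sub_apply, LinearMap.id_apply] at this
      have := sub_eq_zero.mp this
      exact this
    have hπW : ∀ v ∈ Wsp i, π v = 0 := by
      have hle : Wsp i ≤ LinearMap.ker π := by
        rw [hWsp]
        apply iSup_le; intro h; apply iSup_le; intro hh
        intro v hv
        have hh' := Finset.mem_Icc.mp hh
        have hhm : h ∈ Finset.Icc 1 m := Finset.mem_Icc.mpr ⟨le_trans (by omega) hh'.1, hh'.2⟩
        have := heig h hhm v hv
        rw [if_neg (by omega)] at this
        simp only [LinearMap.mem_ker]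
        rw [this, zero_smul]
      intro v hv
      exact hle hv
    have htop : LinearMap.ker (x ^ i) ⊔ Wsp i = ⊤ := by
      apply le_antisymm le_top
      have h1 : (⊤ : Submodule K A) = LinearMap.ker (x ^ m) := by
        rw [hxm, LinearMap.ker_zero]
      rw [h1, hEker m le_rfl]
      apply iSup_le; intro h; apply iSup_le; intro hh
      have hh' := Finset.mem_Icc.mp hh
      by_cases hhi : h ≤ i
      · refine le_trans ?_ le_sup_left
        rw [hEker i him]
        exact le_iSup₂ (f := fun h _ => E h) h (Finset.mem_Icc.mpr ⟨hh'.1, hhi⟩)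
      · refine le_trans ?_ le_sup_right
        rw [hWsp]
        exact le_iSup₂ (f := fun h _ => E h) h (Finset.mem_Icc.mpr ⟨by omega, hh'.2⟩)
    have hVstab : ∀ v ∈ V, s.toLinearMap v ∈ V := by
      intro v hv
      rw [← hVs]
      exact Submodule.mem_map_of_mem hv
    exact aux_proj_split π (LinearMap.ker (x ^ i)) (Wsp i) V hπP hπW htop
      (aux_aeval_mem s.toLinearMap V hVstab f)
  -- abbreviations
  have αle : ∀ i, 1 ≤ i → i ≤ m → ∀ j : Fin n, α i (j.1 + 1) ≤ k (j.1 + 1) := by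
    intro i hi1 him j
    have := h1a i m (j.1 + 1) (j.1 + 1) hi1 him le_rfl (by omega) le_rfl j.2
    rw [h1b (j.1 + 1) (by omega) j.2] at this
    exact this
  have hdim : ∀ V : {V : Fin n → Submodule K A //
        Monotone V ∧ (∀ j, finrank K ↥(V j) = k (j.1 + 1)) ∧
        (∀ j, (V j).map x ≤ V j) ∧
        (∀ j, (V j).map s.toLinearMap = V j)},
      ∀ i, 1 ≤ i → i ≤ m → ∀ j : Fin n,
        finrank K ↥(V.1 j ⊓ LinearMap.ker (x ^ i)) + finrank K ↥(V.1 j ⊓ Wsp i)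
          = k (j.1 + 1) := by
    intro V i hi1 him j
    rw [key i hi1 him (V.1 j) (V.2.2.2.2 j)]
    exact V.2.2.1 j
  constructor
  · -- closed: the complement is open
    rw [← isOpen_compl_iff]
    have hEq : {V : {V : Fin n → Submodule K A //
        Monotone V ∧ (∀ j, finrank K ↥(V j) = k (j.1 + 1)) ∧
        (∀ j, (V j).map x ≤ V j) ∧
        (∀ j, (V j).map s.toLinearMap = V j)} |
      ∀ i, 1 ≤ i → i ≤ m → ∀ j : Fin n,
        finrank K ↥(V.1 j ⊓ LinearMap.ker (x ^ i)) = α i (j.1 + 1)}ᶜ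
        = ⋃ i ∈ Finset.Icc 1 m, ⋃ j : Fin n,
          ((Subtype.val ⁻¹' {V : Fin n → Submodule K A |
              finrank K ↥(V j ⊓ LinearMap.ker (x ^ i)) < α i (j.1 + 1)}) ∪
           (Subtype.val ⁻¹' {V : Fin n → Submodule K A |
              finrank K ↥(V j ⊓ Wsp i) < k (j.1 + 1) - α i (j.1 + 1)})) := by
      ext V
      simp only [Set.mem_compl_iff, Set.mem_setOf_eq, Set.mem_iUnion, Set.mem_union,
        Set.mem_preimage, Finset.mem_Icc, not_forall]
      constructor
      · rintro ⟨i, hi1, him, j, hne⟩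
        refine ⟨i, ⟨hi1, him⟩, j, ?_⟩
        have h1 := hdim V i hi1 him j
        have h2 := αle i hi1 him j
        by_cases hlt : finrank K ↥(V.1 j ⊓ LinearMap.ker (x ^ i)) < α i (j.1 + 1)
        · exact Or.inl hlt
        · exact Or.inr (by omega)
      · rintro ⟨i, ⟨hi1, him⟩, j, hcase⟩
        refine ⟨i, hi1, him, j, ?_⟩
        have h1 := hdim V i hi1 him j
        have h2 := αle i hi1 him j
        rcases hcase with h | h
        · omega
        · omega
    rw [hEq]
    apply isOpen_biUnion
    intro i _
    apply isOpen_iUnion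
    intro j
    exact ((aux_basic_open_lt (Fin n) j _ _).preimage continuous_subtype_val).union
      ((aux_basic_open_lt (Fin n) j _ _).preimage continuous_subtype_val)
  · -- open
    have hEq : {V : {V : Fin n → Submodule K A //
        Monotone V ∧ (∀ j, finrank K ↥(V j) = k (j.1 + 1)) ∧
        (∀ j, (V j).map x ≤ V j) ∧
        (∀ j, (V j).map s.toLinearMap = V j)} |
      ∀ i, 1 ≤ i → i ≤ m → ∀ j : Fin n,
        finrank K ↥(V.1 j ⊓ LinearMap.ker (x ^ i)) = α i (j.1 + 1)}
        = ⋂ i ∈ Finset.Icc 1 m, ⋂ j : Fin n,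
          ((Subtype.val ⁻¹' {V : Fin n → Submodule K A |
              finrank K ↥(V j ⊓ LinearMap.ker (x ^ i)) ≤ α i (j.1 + 1)}) ∩
           (Subtype.val ⁻¹' {V : Fin n → Submodule K A |
              finrank K ↥(V j ⊓ Wsp i) ≤ k (j.1 + 1) - α i (j.1 + 1)})) := by
      ext V
      simp only [Set.mem_setOf_eq, Set.mem_iInter, Set.mem_inter_iff, Set.mem_preimage,
        Finset.mem_Icc]
      constructor
      · intro h i hi j
        have h1 := hdim V i hi.1 hi.2 j
        have h2 := αle i hi.1 hi.2 j
        have h3 := h i hi.1 hi.2 j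
        constructor <;> omega
      · intro h i hi1 him j
        obtain ⟨ha, hb⟩ := h i ⟨hi1, him⟩ j
        have h1 := hdim V i hi1 him j
        have h2 := αle i hi1 him j
        omega
    rw [hEq]
    apply isOpen_biInter_finset
    intro i _
    apply isOpen_iInter_of_finite
    intro j
    exact ((aux_basic_open (Fin n) j _ _).preimage continuous_subtype_val).inter
      ((aux_basic_open (Fin n) j _ _).preimage continuous_subtype_val)
end

section
/- If 𝒜_x ∩ 𝒫_α ≠ ∅, i.e. if there exists an x-stable flag (V_1 ⊆ … ⊆ V_n ⊆ A) with dim V_j = k_j and dim(V_j ∩ ker x^i) = α_{i,j} for all i,j, then the matrix α satisfies conditions (1), (2) and (3). -/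
open Module Submodule

private lemma aux_rank_nullity {K A : Type*} [Field K] [AddCommGroup A] [Module K A]
    [FiniteDimensional K A] (f : A →ₗ[K] A) (p : Submodule K A) :
    finrank K ↥(p.map f) + finrank K ↥(p ⊓ LinearMap.ker f) = finrank K ↥p := by
  have h := LinearMap.finrank_range_add_finrank_ker (f.domRestrict p)
  rw [LinearMap.range_domRestrict, LinearMap.ker_domRestrict] at h
  rw [← h]
  congr 1
  rw [← Submodule.finrank_map_subtype_eq p (Submodule.comap p.subtype (LinearMap.ker f)),
    Submodule.map_comap_subtype]

private lemma aux_ker_pow_mono {K A : Type*} [Field K] [AddCommGroup A] [Module K A]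
    (x : Module.End K A) {i i' : ℕ} (h : i ≤ i') :
    LinearMap.ker (x ^ i) ≤ LinearMap.ker (x ^ i') := by
  obtain ⟨c, rfl⟩ := Nat.exists_eq_add_of_le h
  intro v hv
  simp only [LinearMap.mem_ker] at hv ⊢
  rw [pow_add, pow_mul_comm, Module.End.mul_apply, hv, map_zero]

private lemma aux_stab_pow {K A : Type*} [Field K] [AddCommGroup A] [Module K A]
    (x : Module.End K A) (W : Submodule K A) (hW : W.map x ≤ W) (c : ℕ) :
    W.map (x ^ c) ≤ W := by
  induction c with
  | zero => simp [Module.End.one_eq_id, Submodule.map_id]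
  | succ c ih =>
      rw [pow_succ, Module.End.mul_eq_comp, Submodule.map_comp]
      exact le_trans (Submodule.map_mono hW) ih

private lemma aux_map_le {K A : Type*} [Field K] [AddCommGroup A] [Module K A]
    (x : Module.End K A) (W : Submodule K A) (hW : W.map x ≤ W) (c e : ℕ) :
    (W ⊓ LinearMap.ker (x ^ (c + e))).map (x ^ c) ≤ W ⊓ LinearMap.ker (x ^ e) := by
  apply le_inf
  · exact le_trans (Submodule.map_mono inf_le_left) (aux_stab_pow x W hW c)
  · rintro w ⟨v, hv, rfl⟩
    have h2 : (x ^ (c + e)) v = 0 := hv.2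
    simp only [LinearMap.mem_ker]
    rw [← Module.End.mul_apply, ← pow_add, add_comm e c, h2]

/-- If `𝒜_x ∩ 𝒫_α ≠ ∅`, i.e. if there exists an `x`-stable partial flag
`(V 1 ⊆ … ⊆ V n ⊆ A)` with `dim (V j) = k j` and `dim (V j ∩ ker x^i) = α i j` for all
`1 ≤ i ≤ m`, `1 ≤ j ≤ n`, then the matrix `α` satisfies conditions (1), (2) and (3)
(stated additively, to avoid truncated subtraction; `l i = dim ker x^i`). -/
theorem conditions_of_nonempty_intersection
    (K : Type*) [Field K] [IsAlgClosed K] [CharZero K]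
    (A : Type*) [AddCommGroup A] [Module K A] [FiniteDimensional K A]
    (x : Module.End K A) (m : ℕ) (hm : 1 ≤ m)
    (hxm : x ^ m = 0) (hxm1 : x ^ (m - 1) ≠ 0)
    (n : ℕ) (d : ℕ) (hd : d = finrank K A)
    (k : ℕ → ℕ) (hk : ∀ j j', 1 ≤ j → j ≤ j' → j' ≤ n → k j ≤ k j')
    (hkd : ∀ j, 1 ≤ j → j ≤ n → k j ≤ d)
    (α : ℕ → ℕ → ℕ)
    (l : ℕ → ℕ) (hl : ∀ i, l i = finrank K ↥(LinearMap.ker (x ^ i)))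
    -- the hypothesis `𝒜_x ∩ 𝒫_α ≠ ∅`
    (V : ℕ → Submodule K A)
    (hVmono : ∀ j j', 1 ≤ j → j ≤ j' → j' ≤ n → V j ≤ V j')
    (hVdim : ∀ j, 1 ≤ j → j ≤ n → finrank K ↥(V j) = k j)
    (hVx : ∀ j, 1 ≤ j → j ≤ n → (V j).map x ≤ V j)
    (hVα : ∀ i j, 1 ≤ i → i ≤ m → 1 ≤ j → j ≤ n →
      finrank K ↥(V j ⊓ LinearMap.ker (x ^ i)) = α i j) :
    -- condition (1)
    (∀ i i' j j', 1 ≤ i → i ≤ i' → i' ≤ m → 1 ≤ j → j ≤ j' → j' ≤ n → α i j ≤ α i' j') ∧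
    (∀ j, 1 ≤ j → j ≤ n → α m j = k j) ∧
    -- condition (2): `α i' j' − α (i'-1) j' ≤ α i j − α (i-1) j ≤ α 1 j`
    (∀ i i' j j', 2 ≤ i → i ≤ i' → i' ≤ m → 1 ≤ j' → j' ≤ j → j ≤ n →
      α i' j' + α (i - 1) j ≤ α i j + α (i' - 1) j') ∧
    (∀ i j, 2 ≤ i → i ≤ m → 1 ≤ j → j ≤ n → α i j ≤ α (i - 1) j + α 1 j) ∧
    -- condition (3): `α i j − α (i-1) j ≤ l i − l (i-1)` and `α 1 j ≤ l 1`
    (∀ i j, 2 ≤ i → i ≤ m → 1 ≤ j → j ≤ n → α i j + l (i - 1) ≤ α (i - 1) j + l i) ∧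
    (∀ j, 1 ≤ j → j ≤ n → α 1 j ≤ l 1) := by
  have hsplit : ∀ (a j : ℕ),
      finrank K ↥(V j ⊓ LinearMap.ker (x ^ (a + 1))) =
        finrank K ↥((V j ⊓ LinearMap.ker (x ^ (a + 1))).map (x ^ a)) +
          finrank K ↥(V j ⊓ LinearMap.ker (x ^ a)) := by
    intro a j
    have h := aux_rank_nullity (x ^ a : Module.End K A) (V j ⊓ LinearMap.ker (x ^ (a + 1)))
    rw [inf_assoc, inf_eq_right.mpr (aux_ker_pow_mono x (Nat.le_succ a))] at h
    omega
  have hlsplit : ∀ (a : ℕ),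
      finrank K ↥(LinearMap.ker (x ^ (a + 1))) =
        finrank K ↥((LinearMap.ker (x ^ (a + 1))).map (x ^ a)) +
          finrank K ↥(LinearMap.ker (x ^ a)) := by
    intro a
    have h := aux_rank_nullity (x ^ a : Module.End K A) (LinearMap.ker (x ^ (a + 1)))
    rw [inf_eq_right.mpr (aux_ker_pow_mono x (Nat.le_succ a))] at h
    omega
  refine ⟨?_, ?_, ?_, ?_, ?_, ?_⟩
  · intro i i' j j' h1 h2 h3 h4 h5 h6
    rw [← hVα i j h1 (le_trans h2 h3) h4 (le_trans h5 h6),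
      ← hVα i' j' (le_trans h1 h2) h3 (le_trans h4 h5) h6]
    exact Submodule.finrank_mono (inf_le_inf (hVmono j j' h4 h5 h6) (aux_ker_pow_mono x h2))
  · intro j hj hjn
    have hker : LinearMap.ker (x ^ m) = ⊤ := LinearMap.ker_eq_top.mpr hxm
    rw [← hVα m j hm le_rfl hj hjn, hker, inf_top_eq, hVdim j hj hjn]
  · intro i i' j j' h2i hii' hi'm h1j' hj'j hjn
    obtain ⟨a, rfl⟩ : ∃ a, i = a + 1 := ⟨i - 1, by omega⟩
    obtain ⟨c, rfl⟩ : ∃ c, i' = a + c + 1 := ⟨i' - (a + 1), by omega⟩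
    simp only [Nat.add_sub_cancel]
    have hjn' : 1 ≤ j := le_trans h1j' hj'j
    have hj'n : j' ≤ n := le_trans hj'j hjn
    have e1 : α (a + 1) j =
        finrank K ↥((V j ⊓ LinearMap.ker (x ^ (a + 1))).map (x ^ a)) + α a j := by
      rw [← hVα (a + 1) j (by omega) (by omega) hjn' hjn,
        ← hVα a j (by omega) (by omega) hjn' hjn]
      exact hsplit a j
    have e2 : α (a + c + 1) j' =
        finrank K ↥((V j' ⊓ LinearMap.ker (x ^ (a + c + 1))).map (x ^ (a + c))) +
          α (a + c) j' := by
      rw [← hVα (a + c + 1) j' (by omega) (by omega) h1j' hj'n,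
        ← hVα (a + c) j' (by omega) (by omega) h1j' hj'n]
      exact hsplit (a + c) j'
    have hle : (V j' ⊓ LinearMap.ker (x ^ (a + c + 1))).map (x ^ (a + c)) ≤
        (V j ⊓ LinearMap.ker (x ^ (a + 1))).map (x ^ a) := by
      have hcomp : (x : Module.End K A) ^ (a + c) = x ^ a * x ^ c := by rw [← pow_add]
      rw [hcomp, Module.End.mul_eq_comp, Submodule.map_comp]
      apply Submodule.map_mono
      have h := aux_map_le x (V j') (hVx j' h1j' hj'n) c (a + 1)
      rw [show c + (a + 1) = a + c + 1 by omega] at h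
      exact le_trans h (inf_le_inf (hVmono j' j h1j' hj'j hjn) le_rfl)
    have := Submodule.finrank_mono hle
    omega
  · intro i j h2i him h1j hjn
    obtain ⟨a, rfl⟩ : ∃ a, i = a + 1 := ⟨i - 1, by omega⟩
    simp only [Nat.add_sub_cancel]
    have e1 : α (a + 1) j =
        finrank K ↥((V j ⊓ LinearMap.ker (x ^ (a + 1))).map (x ^ a)) + α a j := by
      rw [← hVα (a + 1) j (by omega) (by omega) h1j hjn,
        ← hVα a j (by omega) (by omega) h1j hjn]
      exact hsplit a j
    have hle : (V j ⊓ LinearMap.ker (x ^ (a + 1))).map (x ^ a) ≤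
        V j ⊓ LinearMap.ker (x ^ 1) := by
      have h := aux_map_le x (V j) (hVx j h1j hjn) a 1
      rwa [show a + 1 = a + 1 from rfl] at h
    have := Submodule.finrank_mono hle
    rw [hVα 1 j le_rfl hm h1j hjn] at this
    omega
  · intro i j h2i him h1j hjn
    obtain ⟨a, rfl⟩ : ∃ a, i = a + 1 := ⟨i - 1, by omega⟩
    simp only [Nat.add_sub_cancel]
    have e1 : α (a + 1) j =
        finrank K ↥((V j ⊓ LinearMap.ker (x ^ (a + 1))).map (x ^ a)) + α a j := by
      rw [← hVα (a + 1) j (by omega) (by omega) h1j hjn,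
        ← hVα a j (by omega) (by omega) h1j hjn]
      exact hsplit a j
    have e2 : l (a + 1) =
        finrank K ↥((LinearMap.ker (x ^ (a + 1))).map (x ^ a)) + l a := by
      rw [hl (a + 1), hl a]; exact hlsplit a
    have hle : (V j ⊓ LinearMap.ker (x ^ (a + 1))).map (x ^ a) ≤
        (LinearMap.ker (x ^ (a + 1))).map (x ^ a) :=
      Submodule.map_mono inf_le_right
    have := Submodule.finrank_mono hle
    omega
  · intro j h1j hjn
    rw [← hVα 1 j le_rfl hm h1j hjn, hl 1]
    exact Submodule.finrank_mono inf_le_right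
end

section
/- Let (V_1 ⊆ … ⊆ V_n ⊆ A) be an x-stable, s-fixed flag with dim(V_j ∩ ker x^i) = α_{i,j} for all i,j, where α satisfies conditions (1)–(3). Set A_i := x^{m−i}(ker x^{m−i+1}), κ_{i,j} := α_{m−i+1,j} − α_{m−i,j} for i ≤ m−1 and κ_{m,j} := α_{1,j}. Then for all i,j the subspace x^{m−i}(V_j ∩ ker x^{m−i+1}) has dimension κ_{i,j}, is contained in A_i, and x^{m−i}(V_j ∩ ker x^{m−i+1}) ⊆ x^{m−i'}(V_{j'} ∩ ker x^{m−i'+1}) whenever i ≤ i' and j ≤ j'; i.e. the family (x^{m−i}(V_j ∩ ker x^{m−i+1}))_{i,j} belongs to the doubly indexed flag variety F_{κ_{•,•}}(A_•). -/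
open Module Submodule

private lemma rankAux {K A : Type*} [Field K] [AddCommGroup A] [Module K A]
    [FiniteDimensional K A] (f : A →ₗ[K] A) (W : Submodule K A) :
    Module.finrank K ↥(W.map f) + Module.finrank K ↥(W ⊓ LinearMap.ker f) =
      Module.finrank K ↥W := by
  have h := LinearMap.finrank_range_add_finrank_ker (f.domRestrict W)
  rw [LinearMap.range_domRestrict, LinearMap.ker_domRestrict] at h
  have heq : Submodule.comap W.subtype (LinearMap.ker f) =
      Submodule.comap W.subtype (W ⊓ LinearMap.ker f) := by
    rw [Submodule.comap_inf, Submodule.comap_subtype_self, top_inf_eq]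
  rw [heq, (Submodule.comapSubtypeEquivOfLe
    (inf_le_left : W ⊓ LinearMap.ker f ≤ W)).finrank_eq] at h
  exact h

/-- Let `(V 1 ⊆ … ⊆ V n ⊆ A)` be an `x`-stable, `s`-fixed flag with
`dim (V j ∩ ker x^i) = α i j`, where `α` satisfies conditions (1)–(3).  Set
`A_i := x^(m-i) (ker x^(m-i+1))` and `κ i j := α (m-i+1) j − α (m-i) j` for `i ≤ m-1`,
`κ m j := α 1 j` (the matrix `κ` is passed through its defining equations, stated
additively).  Then for all `i, j` the subspace `x^(m-i) (V j ∩ ker x^(m-i+1))` has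
dimension `κ i j`, is contained in `A_i`, and these subspaces increase in `(i, j)`;
i.e. the family belongs to the doubly indexed flag variety `F_κ(A_•)`. -/
theorem forward_map_wellDefined
    (K : Type*) [Field K] [IsAlgClosed K] [CharZero K]
    (A : Type*) [AddCommGroup A] [Module K A] [FiniteDimensional K A]
    (x : Module.End K A) (m : ℕ) (hm : 1 ≤ m)
    (hxm : x ^ m = 0) (hxm1 : x ^ (m - 1) ≠ 0)
    (n : ℕ) (d : ℕ) (hd : d = finrank K A)
    (k : ℕ → ℕ) (hk : ∀ j j', 1 ≤ j → j ≤ j' → j' ≤ n → k j ≤ k j')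
    (hkd : ∀ j, 1 ≤ j → j ≤ n → k j ≤ d)
    -- the semisimple element `s`, with `s x s⁻¹ = q x`, encoded through the grading
    (s : A ≃ₗ[K] A) (q : Kˣ) (lam0 : Kˣ)
    (hsx : ∀ v : A, s (x v) = (q : K) • x (s v))
    (E : ℕ → Submodule K A)
    (hEker : ∀ i, i ≤ m → LinearMap.ker (x ^ i) = ⨆ h ∈ Finset.Icc 1 i, E h)
    (hEindep : ∀ i, 1 ≤ i → i ≤ m → Disjoint (E i) (LinearMap.ker (x ^ (i - 1))))
    (hEx : ∀ i, 2 ≤ i → i ≤ m → (E i).map x ≤ E (i - 1))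
    (hEs : ∀ i, 1 ≤ i → i ≤ m → ∀ v ∈ E i, s v = ((lam0 : K) * ((q : K)⁻¹) ^ i) • v)
    (hdist : ∀ i i', 1 ≤ i → i < i' → i' ≤ m →
      (lam0 : K) * ((q : K)⁻¹) ^ i ≠ (lam0 : K) * ((q : K)⁻¹) ^ i')
    -- the matrix `α`, satisfying conditions (1)–(3)
    (α : ℕ → ℕ → ℕ)
    (l : ℕ → ℕ) (hl : ∀ i, l i = finrank K ↥(LinearMap.ker (x ^ i)))
    (h1a : ∀ i i' j j', 1 ≤ i → i ≤ i' → i' ≤ m → 1 ≤ j → j ≤ j' → j' ≤ n → α i j ≤ α i' j')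
    (h1b : ∀ j, 1 ≤ j → j ≤ n → α m j = k j)
    (h2a : ∀ i i' j j', 2 ≤ i → i ≤ i' → i' ≤ m → 1 ≤ j' → j' ≤ j → j ≤ n →
      α i' j' + α (i - 1) j ≤ α i j + α (i' - 1) j')
    (h2b : ∀ i j, 2 ≤ i → i ≤ m → 1 ≤ j → j ≤ n → α i j ≤ α (i - 1) j + α 1 j)
    (h3a : ∀ i j, 2 ≤ i → i ≤ m → 1 ≤ j → j ≤ n → α i j + l (i - 1) ≤ α (i - 1) j + l i)
    (h3b : ∀ j, 1 ≤ j → j ≤ n → α 1 j ≤ l 1)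
    -- the matrix `κ`, through its defining equations
    (κ : ℕ → ℕ → ℕ)
    (hκ1 : ∀ i j, 1 ≤ i → i ≤ m - 1 → 1 ≤ j → j ≤ n → κ i j + α (m - i) j = α (m - i + 1) j)
    (hκ2 : ∀ j, 1 ≤ j → j ≤ n → κ m j = α 1 j)
    -- the `x`-stable, `s`-fixed flag with intersection dimensions `α`
    (V : ℕ → Submodule K A)
    (hVmono : ∀ j j', 1 ≤ j → j ≤ j' → j' ≤ n → V j ≤ V j')
    (hVdim : ∀ j, 1 ≤ j → j ≤ n → finrank K ↥(V j) = k j)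
    (hVx : ∀ j, 1 ≤ j → j ≤ n → (V j).map x ≤ V j)
    (hVs : ∀ j, 1 ≤ j → j ≤ n → (V j).map s.toLinearMap = V j)
    (hVα : ∀ i j, 1 ≤ i → i ≤ m → 1 ≤ j → j ≤ n →
      finrank K ↥(V j ⊓ LinearMap.ker (x ^ i)) = α i j) :
    -- the family `(x^(m-i) (V j ∩ ker x^(m-i+1)))_{i,j}` belongs to `F_κ(A_•)`
    (∀ i j, 1 ≤ i → i ≤ m → 1 ≤ j → j ≤ n →
      finrank K ↥((V j ⊓ LinearMap.ker (x ^ (m - i + 1))).map (x ^ (m - i))) = κ i j) ∧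
    (∀ i j, 1 ≤ i → i ≤ m → 1 ≤ j → j ≤ n →
      (V j ⊓ LinearMap.ker (x ^ (m - i + 1))).map (x ^ (m - i)) ≤
        (LinearMap.ker (x ^ (m - i + 1))).map (x ^ (m - i))) ∧
    (∀ i i' j j', 1 ≤ i → i ≤ i' → i' ≤ m → 1 ≤ j → j ≤ j' → j' ≤ n →
      (V j ⊓ LinearMap.ker (x ^ (m - i + 1))).map (x ^ (m - i)) ≤
        (V j' ⊓ LinearMap.ker (x ^ (m - i' + 1))).map (x ^ (m - i'))) := by
  -- x-stable under powers
  have hVxp : ∀ t j, 1 ≤ j → j ≤ n → ∀ v ∈ V j, (x ^ t) v ∈ V j := by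
    intro t j hj1 hjn
    induction t with
    | zero => intro v hv; simpa using hv
    | succ t ih =>
      intro v hv
      have : (x ^ (t + 1)) v = x ((x ^ t) v) := by rw [pow_succ']; rfl
      rw [this]
      exact hVx j hj1 hjn ⟨(x ^ t) v, ih v hv, rfl⟩
  -- monotonicity of kernels of powers
  have hkermono : ∀ a b : ℕ, a ≤ b →
      LinearMap.ker (x ^ a) ≤ LinearMap.ker (x ^ b) := by
    intro a b hab v hv
    have : x ^ b = x ^ (b - a) * x ^ a := by
      rw [← pow_add]; congr 1; omega
    rw [LinearMap.mem_ker] at hv ⊢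
    rw [this]
    show (x ^ (b - a)) ((x ^ a) v) = 0
    rw [hv, map_zero]
  refine ⟨?_, ?_, ?_⟩
  · intro i j hi1 him hj1 hjn
    have haux := rankAux (x ^ (m - i)) (V j ⊓ LinearMap.ker (x ^ (m - i + 1)))
    have hinf : V j ⊓ LinearMap.ker (x ^ (m - i + 1)) ⊓ LinearMap.ker (x ^ (m - i)) =
        V j ⊓ LinearMap.ker (x ^ (m - i)) := by
      rw [inf_assoc]
      congr 1
      exact inf_eq_right.mpr (hkermono (m - i) (m - i + 1) (by omega))
    rw [hinf] at haux
    have hdimW : finrank K ↥(V j ⊓ LinearMap.ker (x ^ (m - i + 1))) = α (m - i + 1) j :=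
      hVα (m - i + 1) j (by omega) (by omega) hj1 hjn
    rcases eq_or_lt_of_le him with heq | hlt
    · -- i = m
      have h0 : m - i = 0 := by omega
      rw [h0] at haux hdimW ⊢
      have hker0 : LinearMap.ker ((x : Module.End K A) ^ 0) = ⊥ := by
        rw [pow_zero]; exact LinearMap.ker_id
      rw [hker0, inf_bot_eq, finrank_bot, Nat.add_zero] at haux
      rw [haux, heq, hκ2 j hj1 hjn]
      simpa using hdimW
    · -- i < m
      have hdim2 : finrank K ↥(V j ⊓ LinearMap.ker (x ^ (m - i))) = α (m - i) j :=
      hVα (m - i) j (by omega) (by omega) hj1 hjn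
      have hκ := hκ1 i j hi1 (by omega) hj1 hjn
      omega
  · intro i j hi1 him hj1 hjn
    exact Submodule.map_mono inf_le_right
  · intro i i' j j' hi1 hii' hi'm hj1 hjj' hj'n
    rintro w ⟨v, ⟨hvV, hvK⟩, rfl⟩
    refine ⟨(x ^ (i' - i)) v, ⟨hVmono j j' hj1 hjj' hj'n (hVxp (i' - i) j hj1 (le_trans hjj' hj'n) v hvV), ?_⟩, ?_⟩
    · simp only [SetLike.mem_coe, LinearMap.mem_ker] at hvK ⊢
      have harith : m - i + 1 = (m - i' + 1) + (i' - i) := by omega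
      rw [harith, pow_add, Module.End.mul_apply] at hvK
      exact hvK
    · show (x ^ (m - i')) ((x ^ (i' - i)) v) = (x ^ (m - i)) v
      have harith : m - i = (m - i') + (i' - i) := by omega
      rw [harith, pow_add, Module.End.mul_apply]
end

section
/- For a subspace V ⊆ A, define V^{(hom)} := ⊕_{i=1}^m π_i(V ∩ ker x^i), where π_i: A → E_i is the projection associated to the decomposition A = E_1 ⊕ … ⊕ E_m. Then: (i) V^{(hom)} is homogeneous (V^{(hom)} = ⊕_i (E_i ∩ V^{(hom)})) and dim V^{(hom)} = dim V; (ii) dim(V^{(hom)} ∩ ker x^i) = dim(V ∩ ker x^i) for all i; (iii) if V is x-stable (x(V) ⊆ V), then V^{(hom)} is x-stable. -/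
/-!
Write `Kᵢ = ker xⁱ`. Since `Kᵢ = Eᵢ ⊕ Kᵢ₋₁` and `πᵢ` is the identity on `Eᵢ` and vanishes on `Kᵢ₋₁`,
the kernel of `πᵢ` on `U ∩ Kᵢ` is `U ∩ Kᵢ₋₁` for every subspace `U`; hence
`dim (U ∩ Kᵢ) = ∑_{h ≤ i} dim πₕ(U ∩ Kₕ)`. The pieces `πₕ(V ∩ Kₕ)` of `V^hom` lie in `Eₕ`, so
`πₕ(V^hom ∩ Kₕ) = πₕ(V ∩ Kₕ)` and the dimension formula gives (i) and (ii). For (iii), the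
relations `x(Eₕ) ⊆ Eₕ₋₁` make `x ∘ πₕ = πₕ₋₁ ∘ x` (and `x ∘ π₁ = 0`), so `x` maps the piece
`πₕ(V ∩ Kₕ)` into `πₕ₋₁(V ∩ Kₕ₋₁)` when `x(V) ⊆ V`.
-/

open Module Submodule

section Ring

variable {ι K A : Type*} [Ring K] [AddCommGroup A] [Module K A]

theorem LinearMap.eq_of_mem_biSup {B : Type*} [AddCommGroup B] [Module K B]
    {E : ι → Submodule K A} {t : Finset ι} {f g : A →ₗ[K] B}
    (h : ∀ j ∈ t, ∀ v ∈ E j, f v = g v) {v : A} (hv : v ∈ ⨆ j ∈ t, E j) : f v = g v :=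
  (iSup₂_le fun j hj => LinearMap.le_eqLocus.2 (h j hj) : ⨆ j ∈ t, E j ≤ f.eqLocus g) hv

structure IsProjectionFamily (s : Finset ι) (E : ι → Submodule K A) (π : ι → A →ₗ[K] A) :
    Prop where
  apply_of_mem : ∀ i ∈ s, ∀ v ∈ E i, π i v = v
  apply_of_mem_of_ne : ∀ i ∈ s, ∀ j ∈ s, i ≠ j → ∀ v ∈ E j, π i v = 0

namespace IsProjectionFamily

variable {s : Finset ι} {E : ι → Submodule K A} {π : ι → A →ₗ[K] A}

theorem apply_eq_zero_of_mem_biSup (hπ : IsProjectionFamily s E π) {i : ι} (hi : i ∈ s)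
    {t : Finset ι} (ht : t ⊆ s) (hit : i ∉ t) {v : A} (hv : v ∈ ⨆ j ∈ t, E j) : π i v = 0 :=
  LinearMap.eq_of_mem_biSup (g := 0)
    (fun j hj w hw => hπ.apply_of_mem_of_ne i hi j (ht hj) (ne_of_mem_of_not_mem hj hit).symm w hw)
    hv

theorem apply_mem (hπ : IsProjectionFamily s E π) (htop : ⨆ j ∈ s, E j = ⊤) {i : ι} (hi : i ∈ s)
    (v : A) : π i v ∈ E i := by
  have : ⨆ j ∈ s, E j ≤ (E i).comap (π i) := iSup₂_le fun j hj w hw => by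
    rcases eq_or_ne i j with rfl | hij
    · simpa [hπ.apply_of_mem i hi w hw] using hw
    · simp [hπ.apply_of_mem_of_ne i hi j hj hij w hw]
  exact this (htop ▸ mem_top)

theorem map_le (hπ : IsProjectionFamily s E π) (htop : ⨆ j ∈ s, E j = ⊤) (U : Submodule K A)
    {i : ι} (hi : i ∈ s) : U.map (π i) ≤ E i := by
  rintro _ ⟨v, -, rfl⟩
  exact hπ.apply_mem htop hi v

end IsProjectionFamily

section Kernels

variable {x : Module.End K A} {m : ℕ} {E : ℕ → Submodule K A} {π : ℕ → A →ₗ[K] A}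

theorem ker_pow_eq_sup (hE : ∀ i, i ≤ m → LinearMap.ker (x ^ i) = ⨆ h ∈ Finset.Icc 1 i, E h)
    {i : ℕ} (hi : 1 ≤ i) (him : i ≤ m) :
    LinearMap.ker (x ^ i) = E i ⊔ LinearMap.ker (x ^ (i - 1)) := by
  have hIcc : Finset.Icc 1 i = insert i (Finset.Icc 1 (i - 1)) := by
    ext h
    simp only [Finset.mem_Icc, Finset.mem_insert]
    omega
  rw [hE i him, hE (i - 1) (by omega), hIcc, Finset.iSup_insert]

theorem le_ker_pow (hE : ∀ i, i ≤ m → LinearMap.ker (x ^ i) = ⨆ h ∈ Finset.Icc 1 i, E h)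
    {i : ℕ} (hi : 1 ≤ i) (him : i ≤ m) : E i ≤ LinearMap.ker (x ^ i) :=
  ker_pow_eq_sup hE hi him ▸ le_sup_left

theorem proj_eq_zero_of_mem_ker_pow (hπ : IsProjectionFamily (Finset.Icc 1 m) E π)
    (hE : ∀ i, i ≤ m → LinearMap.ker (x ^ i) = ⨆ h ∈ Finset.Icc 1 i, E h)
    {i : ℕ} (hi : 1 ≤ i) (him : i ≤ m) {v : A} (hv : v ∈ LinearMap.ker (x ^ (i - 1))) :
    π i v = 0 :=
  hπ.apply_eq_zero_of_mem_biSup (Finset.mem_Icc.2 ⟨hi, him⟩)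
    (Finset.Icc_subset_Icc_right (by omega)) (by simp only [Finset.mem_Icc]; omega)
    (hE (i - 1) (by omega) ▸ hv)

theorem sub_proj_mem_ker_pow (hπ : IsProjectionFamily (Finset.Icc 1 m) E π)
    (hE : ∀ i, i ≤ m → LinearMap.ker (x ^ i) = ⨆ h ∈ Finset.Icc 1 i, E h)
    {i : ℕ} (hi : 1 ≤ i) (him : i ≤ m) {v : A} (hv : v ∈ LinearMap.ker (x ^ i)) :
    v - π i v ∈ LinearMap.ker (x ^ (i - 1)) := by
  rw [ker_pow_eq_sup hE hi him] at hv
  obtain ⟨e, he, k, hk, rfl⟩ := mem_sup.1 hv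
  rwa [map_add, hπ.apply_of_mem i (Finset.mem_Icc.2 ⟨hi, him⟩) e he,
    proj_eq_zero_of_mem_ker_pow hπ hE hi him hk, add_zero, add_sub_cancel_left]

theorem map_ker_pow_succ_le (n : ℕ) :
    (LinearMap.ker (x ^ (n + 1))).map x ≤ LinearMap.ker (x ^ n) := by
  rintro _ ⟨v, hv, rfl⟩
  rwa [LinearMap.mem_ker, ← Module.End.mul_apply, ← pow_succ]

def homogenization (x : Module.End K A) (π : ℕ → A →ₗ[K] A) (m : ℕ) (V : Submodule K A) :
    Submodule K A :=
  ⨆ i ∈ Finset.Icc 1 m, (V ⊓ LinearMap.ker (x ^ i)).map (π i)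

theorem map_proj_le_homogenization (V : Submodule K A) {i : ℕ} (hi : i ∈ Finset.Icc 1 m) :
    (V ⊓ LinearMap.ker (x ^ i)).map (π i) ≤ homogenization x π m V :=
  le_iSup₂ (f := fun j _ => (V ⊓ LinearMap.ker (x ^ j)).map (π j)) i hi

theorem proj_mem_of_mem_homogenization (hπ : IsProjectionFamily (Finset.Icc 1 m) E π)
    (htop : ⨆ j ∈ Finset.Icc 1 m, E j = ⊤) {V : Submodule K A} {i : ℕ}
    (hi : i ∈ Finset.Icc 1 m) {v : A} (hv : v ∈ homogenization x π m V) :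
    π i v ∈ (V ⊓ LinearMap.ker (x ^ i)).map (π i) := by
  have : homogenization x π m V ≤ ((V ⊓ LinearMap.ker (x ^ i)).map (π i)).comap (π i) :=
    iSup₂_le fun j hj w hw => by
      have hwE : w ∈ E j := hπ.map_le htop _ hj hw
      rcases eq_or_ne i j with rfl | hij
      · rwa [mem_comap, hπ.apply_of_mem i hi w hwE]
      · simp [hπ.apply_of_mem_of_ne i hi j hj hij w hwE]
  exact this hv

theorem map_proj_homogenization_inf_ker_pow (hπ : IsProjectionFamily (Finset.Icc 1 m) E π)
    (htop : ⨆ j ∈ Finset.Icc 1 m, E j = ⊤)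
    (hE : ∀ i, i ≤ m → LinearMap.ker (x ^ i) = ⨆ h ∈ Finset.Icc 1 i, E h)
    (V : Submodule K A) {i : ℕ} (hi : i ∈ Finset.Icc 1 m) :
    (homogenization x π m V ⊓ LinearMap.ker (x ^ i)).map (π i) =
      (V ⊓ LinearMap.ker (x ^ i)).map (π i) := by
  refine le_antisymm ?_ fun w hw => ?_
  · rintro _ ⟨v, hv, rfl⟩
    exact proj_mem_of_mem_homogenization hπ htop hi hv.1
  · have hwE : w ∈ E i := hπ.map_le htop _ hi hw
    have hi' := Finset.mem_Icc.1 hi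
    exact ⟨w, ⟨map_proj_le_homogenization V hi hw, le_ker_pow hE hi'.1 hi'.2 hwE⟩,
      hπ.apply_of_mem i hi w hwE⟩

theorem homogenization_eq_iSup_inf (hπ : IsProjectionFamily (Finset.Icc 1 m) E π)
    (htop : ⨆ j ∈ Finset.Icc 1 m, E j = ⊤) (V : Submodule K A) :
    homogenization x π m V = ⨆ h ∈ Finset.Icc 1 m, E h ⊓ homogenization x π m V :=
  le_antisymm
    (iSup₂_le fun h hh => (le_inf (hπ.map_le htop _ hh) (map_proj_le_homogenization V hh)).trans
      (le_iSup₂ (f := fun j _ => E j ⊓ homogenization x π m V) h hh))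
    (iSup₂_le fun _ _ => inf_le_right)

theorem comp_proj_one (hπ : IsProjectionFamily (Finset.Icc 1 m) E π)
    (htop : ⨆ j ∈ Finset.Icc 1 m, E j = ⊤)
    (hE : ∀ i, i ≤ m → LinearMap.ker (x ^ i) = ⨆ h ∈ Finset.Icc 1 i, E h) (hm : 1 ≤ m) :
    x ∘ₗ π 1 = 0 :=
  LinearMap.ext fun v => by
    simpa using le_ker_pow hE le_rfl hm (hπ.apply_mem htop (Finset.mem_Icc.2 ⟨le_rfl, hm⟩) v)

theorem comp_proj_of_two_le (hπ : IsProjectionFamily (Finset.Icc 1 m) E π)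
    (htop : ⨆ j ∈ Finset.Icc 1 m, E j = ⊤)
    (hE : ∀ i, i ≤ m → LinearMap.ker (x ^ i) = ⨆ h ∈ Finset.Icc 1 i, E h)
    (hEx : ∀ i, 2 ≤ i → i ≤ m → (E i).map x ≤ E (i - 1)) {h : ℕ} (h2 : 2 ≤ h) (hm : h ≤ m) :
    x ∘ₗ π h = π (h - 1) ∘ₗ x := by
  refine LinearMap.ext fun v => LinearMap.eq_of_mem_biSup (fun j hj w hw => ?_)
    (htop ▸ mem_top : v ∈ ⨆ j ∈ Finset.Icc 1 m, E j)
  have hj' := Finset.mem_Icc.1 hj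
  have hh : h ∈ Finset.Icc 1 m := Finset.mem_Icc.2 ⟨by omega, hm⟩
  have hh' : h - 1 ∈ Finset.Icc 1 m := Finset.mem_Icc.2 ⟨by omega, by omega⟩
  simp only [LinearMap.comp_apply]
  rcases eq_or_ne h j with rfl | hhj
  · rw [hπ.apply_of_mem h hh w hw,
      hπ.apply_of_mem (h - 1) hh' (x w) (hEx h h2 hm (mem_map_of_mem hw))]
  rw [hπ.apply_of_mem_of_ne h hh j hj hhj w hw, map_zero]
  rcases eq_or_ne j 1 with rfl | hj1
  · have hxw : x w = 0 := by simpa using le_ker_pow hE le_rfl hj'.2 hw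
    rw [hxw, map_zero]
  · exact (hπ.apply_of_mem_of_ne (h - 1) hh' (j - 1) (Finset.mem_Icc.2 ⟨by omega, by omega⟩)
      (by omega) (x w) (hEx j (by omega) hj'.2 (mem_map_of_mem hw))).symm

theorem map_homogenization_le (hπ : IsProjectionFamily (Finset.Icc 1 m) E π)
    (htop : ⨆ j ∈ Finset.Icc 1 m, E j = ⊤)
    (hE : ∀ i, i ≤ m → LinearMap.ker (x ^ i) = ⨆ h ∈ Finset.Icc 1 i, E h)
    (hEx : ∀ i, 2 ≤ i → i ≤ m → (E i).map x ≤ E (i - 1)) {V : Submodule K A}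
    (hV : V.map x ≤ V) : (homogenization x π m V).map x ≤ homogenization x π m V := by
  simp only [homogenization, Submodule.map_iSup]
  refine iSup₂_le fun h hh => ?_
  have hh' := Finset.mem_Icc.1 hh
  rw [← map_comp]
  rcases eq_or_ne h 1 with rfl | h1
  · rw [comp_proj_one hπ htop hE hh'.2, Submodule.map_zero]
    exact bot_le
  obtain ⟨n, rfl⟩ : ∃ n, h = n + 1 := ⟨h - 1, by omega⟩
  rw [comp_proj_of_two_le hπ htop hE hEx (by omega) hh'.2, map_comp, Nat.add_sub_cancel]
  have hx : (V ⊓ LinearMap.ker (x ^ (n + 1))).map x ≤ V ⊓ LinearMap.ker (x ^ n) :=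
    (map_inf_le x).trans (inf_le_inf hV (map_ker_pow_succ_le n))
  exact (map_mono hx).trans (map_proj_le_homogenization V (Finset.mem_Icc.2 ⟨by omega, by omega⟩))

end Kernels

end Ring

section DivisionRing

variable {K A : Type*} [DivisionRing K] [AddCommGroup A] [Module K A] [FiniteDimensional K A]
  {x : Module.End K A} {m : ℕ} {E : ℕ → Submodule K A} {π : ℕ → A →ₗ[K] A}

theorem finrank_map_proj_add_finrank (hπ : IsProjectionFamily (Finset.Icc 1 m) E π)
    (hE : ∀ i, i ≤ m → LinearMap.ker (x ^ i) = ⨆ h ∈ Finset.Icc 1 i, E h)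
    {i : ℕ} (hi : 1 ≤ i) (him : i ≤ m) (U : Submodule K A) :
    finrank K ↥((U ⊓ LinearMap.ker (x ^ i)).map (π i)) +
        finrank K ↥(U ⊓ LinearMap.ker (x ^ (i - 1))) =
      finrank K ↥(U ⊓ LinearMap.ker (x ^ i)) := by
  have hle : U ⊓ LinearMap.ker (x ^ (i - 1)) ≤ U ⊓ LinearMap.ker (x ^ i) :=
    inf_le_inf_left U (ker_pow_eq_sup hE hi him ▸ le_sup_right)
  have hker : LinearMap.ker ((π i).domRestrict (U ⊓ LinearMap.ker (x ^ i))) =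
      (U ⊓ LinearMap.ker (x ^ (i - 1))).comap (U ⊓ LinearMap.ker (x ^ i)).subtype := by
    ext ⟨v, hvU, hvK⟩
    simp only [LinearMap.mem_ker, LinearMap.domRestrict_apply, mem_comap, coe_subtype, mem_inf]
    exact ⟨fun hv0 => ⟨hvU, by simpa [hv0] using sub_proj_mem_ker_pow hπ hE hi him hvK⟩,
      fun hv => proj_eq_zero_of_mem_ker_pow hπ hE hi him hv.2⟩
  rw [← LinearMap.range_domRestrict, ← (comapSubtypeEquivOfLe hle).finrank_eq, ← hker]
  exact LinearMap.finrank_range_add_finrank_ker _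

theorem finrank_inf_ker_pow_eq_sum (hπ : IsProjectionFamily (Finset.Icc 1 m) E π)
    (hE : ∀ i, i ≤ m → LinearMap.ker (x ^ i) = ⨆ h ∈ Finset.Icc 1 i, E h) (U : Submodule K A) :
    ∀ i ≤ m, finrank K ↥(U ⊓ LinearMap.ker (x ^ i)) =
      ∑ h ∈ Finset.Icc 1 i, finrank K ↥((U ⊓ LinearMap.ker (x ^ h)).map (π h))
  | 0, _ => by simp [Module.End.one_eq_id]
  | i + 1, hi => by
    rw [Finset.sum_Icc_succ_top (by omega), ← finrank_inf_ker_pow_eq_sum hπ hE U i (by omega),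
      ← finrank_map_proj_add_finrank hπ hE (by omega) hi U, Nat.add_sub_cancel, add_comm]

theorem finrank_homogenization_inf_ker_pow (hπ : IsProjectionFamily (Finset.Icc 1 m) E π)
    (htop : ⨆ j ∈ Finset.Icc 1 m, E j = ⊤)
    (hE : ∀ i, i ≤ m → LinearMap.ker (x ^ i) = ⨆ h ∈ Finset.Icc 1 i, E h)
    (V : Submodule K A) {i : ℕ} (him : i ≤ m) :
    finrank K ↥(homogenization x π m V ⊓ LinearMap.ker (x ^ i)) =
      finrank K ↥(V ⊓ LinearMap.ker (x ^ i)) := by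
  rw [finrank_inf_ker_pow_eq_sum hπ hE _ i him, finrank_inf_ker_pow_eq_sum hπ hE _ i him]
  refine Finset.sum_congr rfl fun h hh => ?_
  rw [map_proj_homogenization_inf_ker_pow hπ htop hE V (Finset.Icc_subset_Icc_right him hh)]

end DivisionRing

theorem homogenization_properties_general
    (K : Type*) [Field K]
    (A : Type*) [AddCommGroup A] [Module K A] [FiniteDimensional K A]
    (x : Module.End K A) (m : ℕ)
    (hxm : x ^ m = 0)
    (E : ℕ → Submodule K A)
    (hEker : ∀ i, i ≤ m → LinearMap.ker (x ^ i) = ⨆ h ∈ Finset.Icc 1 i, E h)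
    (hEx : ∀ i, 2 ≤ i → i ≤ m → (E i).map x ≤ E (i - 1))
    -- the projections `π i : A → E i` attached to the decomposition `A = ⊕ E i`
    (π : ℕ → (A →ₗ[K] A))
    (hπ1 : ∀ i, 1 ≤ i → i ≤ m → ∀ v ∈ E i, π i v = v)
    (hπ2 : ∀ i h, 1 ≤ i → i ≤ m → 1 ≤ h → h ≤ m → i ≠ h → ∀ v ∈ E h, π i v = 0)
    (V : Submodule K A)
    (Vhom : Submodule K A)
    (hVhom : Vhom = ⨆ i ∈ Finset.Icc 1 m, (V ⊓ LinearMap.ker (x ^ i)).map (π i)) :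
    -- (i) homogeneity and preservation of the dimension
    (Vhom = ⨆ h ∈ Finset.Icc 1 m, (E h ⊓ Vhom)) ∧
    (finrank K ↥Vhom = finrank K ↥V) ∧
    -- (ii) the dimensions of the intersections with the kernels are preserved
    (∀ i, 1 ≤ i → i ≤ m →
      finrank K ↥(Vhom ⊓ LinearMap.ker (x ^ i)) = finrank K ↥(V ⊓ LinearMap.ker (x ^ i))) ∧
    -- (iii) `x`-stability is preserved
    (V.map x ≤ V → Vhom.map x ≤ Vhom) := by
  have hπ : IsProjectionFamily (Finset.Icc 1 m) E π :=
    ⟨fun i hi => hπ1 i (Finset.mem_Icc.1 hi).1 (Finset.mem_Icc.1 hi).2,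
      fun i hi j hj => hπ2 i j (Finset.mem_Icc.1 hi).1 (Finset.mem_Icc.1 hi).2
        (Finset.mem_Icc.1 hj).1 (Finset.mem_Icc.1 hj).2⟩
  have htop : ⨆ j ∈ Finset.Icc 1 m, E j = ⊤ := by
    rw [← hEker m le_rfl, hxm, LinearMap.ker_zero]
  obtain rfl : Vhom = homogenization x π m V := hVhom
  refine ⟨homogenization_eq_iSup_inf hπ htop V, ?_,
    fun i _ him => finrank_homogenization_inf_ker_pow hπ htop hEker V him,
    fun hV => map_homogenization_le hπ htop hEker hEx hV⟩
  have := finrank_homogenization_inf_ker_pow hπ htop hEker V le_rfl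
  rwa [hxm, LinearMap.ker_zero, inf_top_eq, inf_top_eq] at this

/-- Let `x` be nilpotent of order `m` on `A`, with a grading
`A = E 1 ⊕ … ⊕ E m`, `ker x^i = E 1 ⊕ … ⊕ E i`, `x (E i) ⊆ E (i-1)`, and let
`π i : A → E i` be the associated projections.  For a subspace `V ⊆ A` put
`V^hom := ⊕_{i=1}^m π i (V ∩ ker x^i)`.  Then:
(i) `V^hom` is homogeneous and `dim V^hom = dim V`;
(ii) `dim (V^hom ∩ ker x^i) = dim (V ∩ ker x^i)` for all `i`;
(iii) if `V` is `x`-stable then so is `V^hom`. -/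
theorem homogenization_properties
    (K : Type*) [Field K] [IsAlgClosed K] [CharZero K]
    (A : Type*) [AddCommGroup A] [Module K A] [FiniteDimensional K A]
    (x : Module.End K A) (m : ℕ) (hm : 1 ≤ m)
    (hxm : x ^ m = 0) (hxm1 : x ^ (m - 1) ≠ 0)
    (E : ℕ → Submodule K A)
    (hEker : ∀ i, i ≤ m → LinearMap.ker (x ^ i) = ⨆ h ∈ Finset.Icc 1 i, E h)
    (hEindep : ∀ i, 1 ≤ i → i ≤ m → Disjoint (E i) (LinearMap.ker (x ^ (i - 1))))
    (hEx : ∀ i, 2 ≤ i → i ≤ m → (E i).map x ≤ E (i - 1))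
    (hEx1 : (E 1).map x = ⊥)
    -- the projections `π i : A → E i` attached to the decomposition `A = ⊕ E i`
    (π : ℕ → (A →ₗ[K] A))
    (hπ1 : ∀ i, 1 ≤ i → i ≤ m → ∀ v ∈ E i, π i v = v)
    (hπ2 : ∀ i h, 1 ≤ i → i ≤ m → 1 ≤ h → h ≤ m → i ≠ h → ∀ v ∈ E h, π i v = 0)
    (V : Submodule K A)
    (Vhom : Submodule K A)
    (hVhom : Vhom = ⨆ i ∈ Finset.Icc 1 m, (V ⊓ LinearMap.ker (x ^ i)).map (π i)) :
    -- (i) homogeneity and preservation of the dimension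
    (Vhom = ⨆ h ∈ Finset.Icc 1 m, (E h ⊓ Vhom)) ∧
    (finrank K ↥Vhom = finrank K ↥V) ∧
    -- (ii) the dimensions of the intersections with the kernels are preserved
    (∀ i, 1 ≤ i → i ≤ m →
      finrank K ↥(Vhom ⊓ LinearMap.ker (x ^ i)) = finrank K ↥(V ⊓ LinearMap.ker (x ^ i))) ∧
    -- (iii) `x`-stability is preserved
    (V.map x ≤ V → Vhom.map x ≤ Vhom) :=
  homogenization_properties_general K A x m hxm E hEker hEx π hπ1 hπ2 V Vhom hVhom
end
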